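/- arXiv:math/0604427 — 10 statements merged into one kernel-verified Lean document; each statement's English description precedes it below -/
import Mathlib

section
/- There exists a constant C > 0 such that for every odd prime p one has κ_p ≤ C·√(η_{0,p}); equivalently, κ_p² ≤ C²·η_{0,p} for all odd primes p. -/
def fermatQuotient (p : ℕ) (k : ℤ) : ℕ :=
  (((k ^ (p - 1) - 1) / p) % p).toNat

noncomputable def kappa (p : ℕ) : ℕ :=
  sInf {n : ℕ | 0 < n ∧ ¬ p ∣ n ∧ fermatQuotient p n ≠ 0}

def mirimanoff (p : ℕ) (t : ZMod p) : ZMod p :=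
  ∑ j ∈ Finset.Icc 1 (p - 1), (j : ZMod p)⁻¹ * t ^ j

/-- η_{0,p}: the number of c ∈ 𝔽_p with γ_p(c) = 0. -/
def eta0 (p : ℕ) : ℕ :=
  ((Finset.range p).filter (fun c : ℕ => mirimanoff p (c : ZMod p) = 0)).card

open Finset

/-! Call `x` good if `x ^ (p - 1) ≡ 1 (mod p²)`. A good `x` satisfies `x ^ p ≡ x (mod p²)`, while
`x ^ p mod p²` only depends on `x mod p`; so two good integers never differ by `p`. As `-1` is
good, `p - 1` is not, whence `κ_p < p`; as good numbers are closed under products, the multiples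
of `N = κ_p - 1` force `(κ_p - 1)(κ_p - 2) < p`.

If `a`, `b`, `a + b` are good, then `p² ∣ (a + b)^p - a^p - b^p`, and expanding binomially with
`C(p, j) / p ≡ (-1)^(j-1) / j (mod p)` turns `((a + b)^p - a^p - b^p) / p` into `-b^p γ_p(-a/b)`
modulo `p`. So every `-a/b` with `a, b ≤ m = (κ_p - 1)/2` is a root of `γ_p`; these are distinct
for coprime pairs since `m² < p`, and at least a quarter of the pairs in `[1, m]²` are coprime.
Hence `m² ≤ 4 η_{0,p}`. -/

lemma fermatQuotient_eq_zero_iff {p : ℕ} (hp : p.Prime) {k : ℤ} (hk : ¬ (p : ℤ) ∣ k) :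
    fermatQuotient p k = 0 ↔ k ^ (p - 1) ≡ 1 [ZMOD p ^ 2] := by
  have hcop : IsCoprime k p := ((Nat.prime_iff_prime_int.mp hp).coprime_iff_not_dvd.mpr hk).symm
  obtain ⟨t, ht⟩ := Int.prime_dvd_pow_sub_one hp hcop
  have hp0 : (p : ℤ) ≠ 0 := by exact_mod_cast hp.ne_zero
  rw [fermatQuotient, Int.modEq_comm, Int.modEq_iff_dvd, ht, Int.mul_ediv_cancel_left _ hp0,
    sq, mul_dvd_mul_iff_left hp0, Int.toNat_eq_zero, Int.dvd_iff_emod_eq_zero]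
  exact ⟨fun h => le_antisymm h (Int.emod_nonneg _ hp0), le_of_eq⟩

lemma pow_modEq_self_of_pow_pred_modEq_one {n p : ℕ} (hp : p ≠ 0) {x : ℤ}
    (h : x ^ (p - 1) ≡ 1 [ZMOD n]) : x ^ p ≡ x [ZMOD n] := by
  simpa [← pow_succ', Nat.sub_add_cancel (Nat.one_le_iff_ne_zero.mpr hp)] using h.mul_left x

lemma not_add_pow_pred_modEq_one {p : ℕ} (hp : 1 < p) {x : ℤ}
    (hx : x ^ (p - 1) ≡ 1 [ZMOD p ^ 2]) : ¬ (x + p) ^ (p - 1) ≡ 1 [ZMOD p ^ 2] := by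
  intro hxp
  have hpow : x ^ p ≡ (x + p) ^ p [ZMOD p ^ 2] := by
    have := dvd_sub_pow_of_dvd_sub (p := p) (a := x + p) (b := x) (by simp) 1
    exact Int.modEq_iff_dvd.mpr (by simpa using this)
  have hcongr : x ≡ x + p [ZMOD p ^ 2] :=
    ((pow_modEq_self_of_pow_pred_modEq_one (by omega) hx).symm.trans hpow).trans
      (pow_modEq_self_of_pow_pred_modEq_one (by omega) hxp)
  have hdvd : (p : ℤ) ^ 2 ∣ (p : ℤ) ^ 1 := by simpa using Int.modEq_iff_dvd.mp hcongr
  norm_cast at hdvd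
  exact absurd ((Nat.pow_dvd_pow_iff_le_right hp).mp hdvd) (by norm_num)

lemma mul_pred_lt_of_forall_pow_pred_modEq_one {p N : ℕ} (hp : 1 < p) (hN : N < p)
    (hS : ∀ k : ℕ, 0 < k → k ≤ N → (k : ℤ) ^ (p - 1) ≡ 1 [ZMOD p ^ 2]) : N * (N - 1) < p := by
  by_contra! hNp
  have hN2 : 2 ≤ N := by
    by_contra! h
    interval_cases N <;> omega
  -- `m * N` is the first multiple of `N` beyond `p`, so `m * N - p ∈ [1, N]`
  set m := p / N + 1
  have hmN : m ≤ N := by have := Nat.div_le_of_le_mul hNp; omega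
  have hp_lt : p < m * N := (Nat.div_lt_iff_lt_mul (by omega)).mp (Nat.lt_succ_self _)
  have hle : m * N ≤ p + N := by rw [Nat.succ_mul]; have := Nat.div_mul_le_self p N; omega
  have hv : (((m * N - p : ℕ) : ℤ) + p) = ((m * N : ℕ) : ℤ) := by push_cast [hp_lt.le]; ring
  have hv0 : 0 < m * N - p := by omega
  have hvN : m * N - p ≤ N := by omega
  refine not_add_pow_pred_modEq_one hp (hS (m * N - p) hv0 hvN) ?_
  rw [hv, Nat.cast_mul, mul_pow]
  simpa using (hS m (Nat.succ_pos _) hmN).mul (hS N (by omega) le_rfl)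

lemma pow_pred_modEq_one_of_lt_kappa {p k : ℕ} (hp : p.Prime) (hk0 : 0 < k) (hkp : k < p)
    (hk : k < kappa p) : (k : ℤ) ^ (p - 1) ≡ 1 [ZMOD p ^ 2] := by
  have hndvd : ¬ p ∣ k := Nat.not_dvd_of_pos_of_lt hk0 hkp
  refine (fermatQuotient_eq_zero_iff hp (by exact_mod_cast hndvd)).mp ?_
  by_contra hfq
  exact Nat.notMem_of_lt_sInf hk ⟨hk0, hndvd, hfq⟩

lemma kappa_lt {p : ℕ} (hp : p.Prime) (hodd : Odd p) : kappa p < p := by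
  have hp1 := hp.one_lt
  have hndvd : ¬ p ∣ p - 1 := Nat.not_dvd_of_pos_of_lt (by omega) (by omega)
  have hcast : ((p - 1 : ℕ) : ℤ) = -1 + p := by push_cast [hp1.le]; ring
  have hfq : fermatQuotient p ((p - 1 : ℕ) : ℤ) ≠ 0 := by
    rw [Ne, fermatQuotient_eq_zero_iff hp (by exact_mod_cast hndvd), hcast]
    refine not_add_pow_pred_modEq_one hp1 ?_
    rw [(Nat.Odd.sub_odd hodd odd_one).neg_one_pow]
  exact (Nat.sInf_le (show p - 1 ∈ {n : ℕ | 0 < n ∧ ¬ p ∣ n ∧ fermatQuotient p n ≠ 0} from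
    ⟨by omega, hndvd, hfq⟩)).trans_lt (by omega)

lemma eq_of_mul_eq_mul_of_coprime {a b c d : ℕ} (hab : a.Coprime b) (hcd : c.Coprime d)
    (h : a * d = c * b) : a = c ∧ b = d :=
  ⟨Nat.dvd_antisymm (hab.dvd_of_dvd_mul_right ⟨d, h.symm⟩) (hcd.dvd_of_dvd_mul_right ⟨b, h⟩),
    Nat.dvd_antisymm (hab.symm.dvd_of_dvd_mul_left ⟨c, h.trans (mul_comm _ _)⟩)
      (hcd.symm.dvd_of_dvd_mul_left ⟨a, h.symm.trans (mul_comm _ _)⟩)⟩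

lemma card_not_coprime_pairs_le (m : ℕ) :
    #{q ∈ Icc 1 m ×ˢ Icc 1 m | ¬ q.1.Coprime q.2} ≤ ∑ d ∈ Icc 2 m, (m / d) ^ 2 := by
  calc #{q ∈ Icc 1 m ×ˢ Icc 1 m | ¬ q.1.Coprime q.2}
      ≤ #((Icc 2 m).biUnion fun d => {x ∈ Icc 1 m | d ∣ x} ×ˢ {x ∈ Icc 1 m | d ∣ x}) := by
        refine card_le_card fun q hq => ?_
        simp only [mem_filter, mem_product, mem_Icc] at hq
        obtain ⟨⟨⟨ha1, ham⟩, hb1, hbm⟩, hnc⟩ := hq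
        have hg := Nat.le_of_dvd ha1 (Nat.gcd_dvd_left q.1 q.2)
        have hg0 := Nat.gcd_pos_of_pos_left q.2 ha1
        have hg1 : q.1.gcd q.2 ≠ 1 := hnc
        simp only [mem_biUnion, mem_product, mem_filter, mem_Icc]
        exact ⟨q.1.gcd q.2, by omega, ⟨⟨ha1, ham⟩, Nat.gcd_dvd_left _ _⟩,
          ⟨hb1, hbm⟩, Nat.gcd_dvd_right _ _⟩
    _ ≤ ∑ d ∈ Icc 2 m, #({x ∈ Icc 1 m | d ∣ x} ×ˢ {x ∈ Icc 1 m | d ∣ x}) := card_biUnion_le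
    _ = ∑ d ∈ Icc 2 m, (m / d) ^ 2 := by
        refine sum_congr rfl fun d _ => ?_
        rw [card_product, ← Nat.Ioc_filter_dvd_card_eq_div, sq]
        rfl

lemma four_mul_sum_sq_div_le (m : ℕ) : 4 * ∑ d ∈ Icc 2 m, (m / d) ^ 2 ≤ 3 * m ^ 2 := by
  rcases lt_or_ge m 2 with hm | hm
  · interval_cases m <;> simp
  have hhead : 4 * (m / 2) ^ 2 ≤ m ^ 2 := by
    calc 4 * (m / 2) ^ 2 = (2 * (m / 2)) ^ 2 := by ring
      _ ≤ m ^ 2 := Nat.pow_le_pow_left (Nat.mul_div_le m 2) 2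
  have htail : 2 * ∑ d ∈ Ioc 2 m, (m / d) ^ 2 ≤ m ^ 2 := by
    have hterm : ∀ d ∈ Ioc 2 m, (((m / d) ^ 2 : ℕ) : ℚ) ≤ m ^ 2 * ((d : ℚ) ^ 2)⁻¹ := by
      intro d _
      calc (((m / d) ^ 2 : ℕ) : ℚ) ≤ ((m : ℚ) / d) ^ 2 := by
            push_cast; gcongr; exact Nat.cast_div_le
        _ = m ^ 2 * ((d : ℚ) ^ 2)⁻¹ := by ring
    have hinv := sum_Ioc_inv_sq_le_sub (α := ℚ) two_ne_zero hm
    have hinv_nonneg : (0 : ℚ) ≤ (m : ℚ)⁻¹ := by positivity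
    have hq : ((2 * ∑ d ∈ Ioc 2 m, (m / d) ^ 2 : ℕ) : ℚ) ≤ ((m ^ 2 : ℕ) : ℚ) := by
      rw [Nat.cast_mul, Nat.cast_sum]
      calc 2 * ∑ d ∈ Ioc 2 m, (((m / d) ^ 2 : ℕ) : ℚ)
          ≤ 2 * ((m : ℚ) ^ 2 * ∑ d ∈ Ioc 2 m, ((d : ℚ) ^ 2)⁻¹) := by
            gcongr 2 * ?_
            rw [mul_sum]
            exact sum_le_sum hterm
        _ ≤ 2 * ((m : ℚ) ^ 2 * 2⁻¹) := by gcongr; push_cast at hinv; linarith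
        _ = ((m ^ 2 : ℕ) : ℚ) := by push_cast; ring
    exact_mod_cast hq
  rw [Icc_eq_cons_Ioc (by omega), sum_cons]
  omega

lemma sq_le_four_mul_card_coprime_pairs (m : ℕ) :
    m ^ 2 ≤ 4 * #{q ∈ Icc 1 m ×ˢ Icc 1 m | q.1.Coprime q.2} := by
  have hsplit := card_filter_add_card_filter_not (s := Icc 1 m ×ˢ Icc 1 m)
    (fun q : ℕ × ℕ => q.1.Coprime q.2)
  rw [card_product, Nat.card_Icc, Nat.add_sub_cancel, ← sq] at hsplit
  have := card_not_coprime_pairs_le m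
  have := four_mul_sum_sq_div_le m
  omega

lemma add_pow_prime_sub_pow_sub_pow {R : Type*} [CommRing R] {p : ℕ} (hp : p.Prime) (x y : R) :
    (x + y) ^ p - x ^ p - y ^ p =
      p * ∑ j ∈ Icc 1 (p - 1), ((p.choose j / p : ℕ) : R) * x ^ j * y ^ (p - j) := by
  have hrange : range (p + 1) = insert 0 (insert p (Icc 1 (p - 1))) := by
    ext j; simp only [mem_range, mem_insert, mem_Icc]; omega
  have hterm : ∀ j ∈ Icc 1 (p - 1), x ^ j * y ^ (p - j) * (p.choose j : R) =
      p * (((p.choose j / p : ℕ) : R) * x ^ j * y ^ (p - j)) := by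
    intro j hj
    rw [mem_Icc] at hj
    obtain ⟨c, hc⟩ := hp.dvd_choose_self (by omega : j ≠ 0) (by omega)
    rw [hc, Nat.mul_div_cancel_left _ hp.pos]
    push_cast
    ring
  rw [add_pow, hrange, sum_insert (by simpa using hp.ne_zero.symm), sum_insert (by simp only [mem_Icc]; omega),
    sum_congr rfl hterm, ← mul_sum]
  simp only [pow_zero, Nat.sub_zero, Nat.choose_zero_right, Nat.cast_one, mul_one, one_mul,
    Nat.sub_self, Nat.choose_self]
  ring

lemma mirimanoff_zero (p : ℕ) : mirimanoff p 0 = 0 :=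
  sum_eq_zero fun j hj => by rw [zero_pow (by rw [mem_Icc] at hj; omega), mul_zero]

lemma one_le_eta0 {p : ℕ} (hp : 0 < p) : 1 ≤ eta0 p :=
  card_pos.mpr ⟨0, by simp [hp, mirimanoff_zero]⟩

lemma card_le_eta0 {p : ℕ} [NeZero p] {α : Type*} {s : Finset α} {f : α → ZMod p}
    (hf : Set.InjOn f s) (hroot : ∀ x ∈ s, mirimanoff p (f x) = 0) : #s ≤ eta0 p :=
  card_le_card_of_injOn (fun x => (f x).val)
    (fun x hx => by simp [ZMod.val_lt, hroot x hx])
    (fun x hx y hy h => hf hx hy (ZMod.val_injective p h))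

section

variable {p : ℕ} [Fact p.Prime]

lemma cast_choose_pred_eq_neg_one_pow :
    ∀ {k : ℕ}, k < p → (((p - 1).choose k : ℕ) : ZMod p) = (-1) ^ k
  | 0, _ => by simp
  | k + 1, hk => by
    have hp := (Fact.out : p.Prime)
    have hpascal : p.choose (k + 1) = (p - 1).choose k + (p - 1).choose (k + 1) := by
      conv_lhs => rw [← Nat.sub_add_cancel hp.one_le]
      exact Nat.choose_succ_succ' _ _
    have hdvd : ((p.choose (k + 1) : ℕ) : ZMod p) = 0 :=
      (ZMod.natCast_eq_zero_iff _ _).mpr (hp.dvd_choose_self (by omega) hk)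
    rw [hpascal, Nat.cast_add, cast_choose_pred_eq_neg_one_pow (by omega)] at hdvd
    linear_combination hdvd

lemma cast_choose_div_prime {j : ℕ} (hj0 : 0 < j) (hjp : j < p) :
    ((p.choose j / p : ℕ) : ZMod p) = -(-1) ^ j / j := by
  have hp := (Fact.out : p.Prime)
  obtain ⟨i, rfl⟩ : ∃ i, j = i + 1 := ⟨j - 1, by omega⟩
  have hj : ((i + 1 : ℕ) : ZMod p) ≠ 0 := by
    rw [Ne, ZMod.natCast_eq_zero_iff]; exact Nat.not_dvd_of_pos_of_lt hj0 hjp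
  obtain ⟨c, hc⟩ := hp.dvd_choose_self hj0.ne' hjp
  have hpascal := Nat.add_one_mul_choose_eq (p - 1) i
  rw [Nat.sub_add_cancel hp.one_le, hc, mul_assoc] at hpascal
  have hci : ((c * (i + 1) : ℕ) : ZMod p) = (-1) ^ i := by
    rw [← Nat.eq_of_mul_eq_mul_left hp.pos hpascal, cast_choose_pred_eq_neg_one_pow (by omega)]
  rw [hc, Nat.mul_div_cancel_left _ hp.pos, eq_div_iff hj, ← Nat.cast_mul, hci]
  ring

lemma pow_mul_mirimanoff_neg_div (x : ZMod p) {y : ZMod p} (hy : y ≠ 0) :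
    y ^ p * mirimanoff p (-x / y) =
      -∑ j ∈ Icc 1 (p - 1), ((p.choose j / p : ℕ) : ZMod p) * x ^ j * y ^ (p - j) := by
  rw [mirimanoff, mul_sum, ← sum_neg_distrib]
  refine sum_congr rfl fun j hj => ?_
  rw [mem_Icc] at hj
  rw [cast_choose_div_prime (by omega) (by omega), ← pow_sub_mul_pow y (by omega : j ≤ p), div_pow]
  field_simp
  ring

lemma mirimanoff_neg_div_eq_zero {a b : ℤ} (hb : (b : ZMod p) ≠ 0)
    (h : (p : ℤ) ^ 2 ∣ (a + b) ^ p - a ^ p - b ^ p) : mirimanoff p (-a / b) = 0 := by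
  have hp := (Fact.out : p.Prime)
  rw [add_pow_prime_sub_pow_sub_pow hp, sq,
    mul_dvd_mul_iff_left (by exact_mod_cast hp.ne_zero)] at h
  have hsum := (ZMod.intCast_zmod_eq_zero_iff_dvd _ p).mpr h
  simp only [Int.cast_sum, Int.cast_mul, Int.cast_pow, Int.cast_natCast] at hsum
  have key := pow_mul_mirimanoff_neg_div (a : ZMod p) hb
  rw [hsum, neg_zero] at key
  exact (mul_eq_zero.mp key).resolve_left (pow_ne_zero _ hb)

lemma card_coprime_pairs_le_eta0 {m : ℕ} (hm : m * m < p)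
    (hS : ∀ k : ℕ, 0 < k → k ≤ 2 * m → (k : ℤ) ^ (p - 1) ≡ 1 [ZMOD p ^ 2]) :
    #{q ∈ Icc 1 m ×ˢ Icc 1 m | q.1.Coprime q.2} ≤ eta0 p := by
  have hp := (Fact.out : p.Prime)
  have hunit : ∀ k : ℕ, 0 < k → k ≤ m → (k : ZMod p) ≠ 0 := fun k hk0 hkm => by
    rw [Ne, ZMod.natCast_eq_zero_iff]; exact Nat.not_dvd_of_pos_of_lt hk0 (by nlinarith)
  refine card_le_eta0 (f := fun q : ℕ × ℕ => -(q.1 : ZMod p) / q.2) ?_ ?_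
  · rintro ⟨a, b⟩ hab ⟨c, d⟩ hcd h
    simp only [mem_coe, mem_filter, mem_product, mem_Icc] at hab hcd
    dsimp only at h
    rw [neg_div, neg_div, neg_inj, div_eq_div_iff (hunit b (by omega) (by omega))
      (hunit d (by omega) (by omega))] at h
    have hcross : a * d = c * b := by
      have hlt : ∀ x y, x ≤ m → y ≤ m → x * y % p = x * y := fun x y hx hy =>
        Nat.mod_eq_of_lt ((Nat.mul_le_mul hx hy).trans_lt hm)
      rw [← hlt a d (by omega) (by omega), ← hlt c b (by omega) (by omega),
        ← ZMod.natCast_eq_natCast_iff']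
      exact_mod_cast h
    obtain ⟨rfl, rfl⟩ := eq_of_mul_eq_mul_of_coprime hab.2 hcd.2 hcross
    rfl
  · rintro ⟨a, b⟩ hab
    simp only [mem_filter, mem_product, mem_Icc] at hab
    have hself : ∀ k : ℕ, 0 < k → k ≤ 2 * m → (k : ℤ) ^ p ≡ k [ZMOD p ^ 2] := fun k hk0 hk =>
      pow_modEq_self_of_pow_pred_modEq_one hp.ne_zero (hS k hk0 hk)
    have hdvd : (p : ℤ) ^ 2 ∣ ((a : ℤ) + b) ^ p - (a : ℤ) ^ p - (b : ℤ) ^ p := by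
      have := ((hself (a + b) (by omega) (by omega)).sub (hself a (by omega) (by omega))).sub
        (hself b (by omega) (by omega))
      push_cast at this
      exact Int.modEq_zero_iff_dvd.mp (by simpa using this)
    simpa using mirimanoff_neg_div_eq_zero (by simpa using hunit b (by omega) (by omega)) hdvd

end

lemma sq_half_pred_kappa_le_four_mul_eta0 {p : ℕ} (hp : p.Prime) (hodd : Odd p) :
    ((kappa p - 1) / 2) ^ 2 ≤ 4 * eta0 p := by
  have : Fact p.Prime := ⟨hp⟩
  have hκ := kappa_lt hp hodd
  have hS : ∀ k : ℕ, 0 < k → k < kappa p → (k : ℤ) ^ (p - 1) ≡ 1 [ZMOD p ^ 2] :=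
    fun k hk0 hk => pow_pred_modEq_one_of_lt_kappa hp hk0 (hk.trans hκ) hk
  have hsmall : (kappa p - 1) * (kappa p - 1 - 1) < p :=
    mul_pred_lt_of_forall_pow_pred_modEq_one hp.one_lt (by omega) fun k hk0 hk =>
      hS k hk0 (by omega)
  set m := (kappa p - 1) / 2
  have hm : m * m < p := (Nat.mul_le_mul (by omega) (by omega)).trans_lt hsmall
  calc m ^ 2 ≤ 4 * #{q ∈ Icc 1 m ×ˢ Icc 1 m | q.1.Coprime q.2} :=
        sq_le_four_mul_card_coprime_pairs m
    _ ≤ 4 * eta0 p :=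
        Nat.mul_le_mul_left 4 (card_coprime_pairs_le_eta0 hm fun k hk0 hk => hS k hk0 (by omega))

/-- κ_p ∈ O(√(η_{0,p})) over odd primes p. -/
theorem kappa_le_const_mul_sqrt_eta :
    ∃ C : ℝ, 0 < C ∧ ∀ p : ℕ, p.Prime → Odd p →
      (kappa p : ℝ) ≤ C * Real.sqrt (eta0 p) := by
  refine ⟨6, by norm_num, fun p hp hodd => ?_⟩
  set m := (kappa p - 1) / 2
  have hη : (1 : ℝ) ≤ √(eta0 p) := Real.one_le_sqrt.mpr (by exact_mod_cast one_le_eta0 hp.pos)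
  have hm : (m : ℝ) ≤ 2 * √(eta0 p) := by
    have h : ((m ^ 2 : ℕ) : ℝ) ≤ ((4 * eta0 p : ℕ) : ℝ) :=
      Nat.cast_le.mpr (sq_half_pred_kappa_le_four_mul_eta0 hp hodd)
    push_cast at h
    nlinarith [Real.sq_sqrt (Nat.cast_nonneg (eta0 p) : (0 : ℝ) ≤ eta0 p),
      Real.sqrt_nonneg (eta0 p : ℝ)]
  have hκ : (kappa p : ℝ) ≤ 2 * m + 2 := by exact_mod_cast (by omega : kappa p ≤ 2 * m + 2)
  linarith
end

section
/- Let p be an odd prime and let a, b ∈ 𝔽_p with a ≠ 0, a ≠ 1, b ≠ 0, b ≠ 1, a·b ≠ 0, a·b ≠ 1. Then (1 − a·b)·γ_p((1 − b)/(1 − a·b)) + (1 − b)·γ_p(a) = (1 − a·b)·γ_p((1 − a)/(1 − a·b)) + (1 − a)·γ_p(b) in 𝔽_p. -/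
/-!
For a prime `p` the carry `q(x, y) = ((x + y)^p - x^p - y^p) / p`, read modulo `p`, depends only on
`x, y mod p`; it is a symmetric 2-cocycle on `𝔽_p`, and homogeneous of degree one because `l^p = l`.
Expanding `(1 - t)^p` with `C(p, k) / p ≡ (-1)^(k-1) / k` gives `γ_p(t) = q(t, 1 - t)` for odd `p`,
hence `l γ_p(t) = q(l t, l - l t)`. For `x = a(1 - b)`, `y = (1 - a)(1 - b)`, `z = b(1 - a)`, so that
`x + y = 1 - b` and `y + z = 1 - a`, the two sides of the relation become `q(x + y, z) + q(x, y)` and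
`q(y + z, x) + q(z, y)`, equal by the cocycle identity.
-/

namespace Mirimanoff

variable (p : ℕ)

def powCarry (x y : ℤ) : ℤ := ((x + y) ^ p - x ^ p - y ^ p) / p

theorem powCarry_comm (x y : ℤ) : powCarry p x y = powCarry p y x := by
  rw [powCarry, powCarry, add_comm x, sub_right_comm]

variable [hp : Fact p.Prime]

theorem prime_dvd_add_pow_sub_pow_sub_pow (x y : ℤ) : (p : ℤ) ∣ (x + y) ^ p - x ^ p - y ^ p := by
  rw [← ZMod.intCast_zmod_eq_zero_iff_dvd]
  push_cast
  rw [add_pow_char]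
  ring

theorem mul_powCarry (x y : ℤ) : p * powCarry p x y = (x + y) ^ p - x ^ p - y ^ p :=
  Int.mul_ediv_cancel' (prime_dvd_add_pow_sub_pow_sub_pow p x y)

theorem powCarry_add_add (x y z : ℤ) :
    powCarry p x y + powCarry p (x + y) z = powCarry p y z + powCarry p x (y + z) := by
  apply mul_left_cancel₀ (Int.natCast_ne_zero.2 hp.out.ne_zero)
  simp only [mul_add, mul_powCarry]
  ring

theorem powCarry_mul_mul (l x y : ℤ) : powCarry p (l * x) (l * y) = l ^ p * powCarry p x y := by
  apply mul_left_cancel₀ (Int.natCast_ne_zero.2 hp.out.ne_zero)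
  rw [mul_left_comm, mul_powCarry, mul_powCarry, ← mul_add, mul_pow, mul_pow, mul_pow]
  ring

theorem powCarry_modEq {x y x' y' : ℤ} (hx : x ≡ x' [ZMOD p]) (hy : y ≡ y' [ZMOD p]) :
    powCarry p x y ≡ powCarry p x' y' [ZMOD p] := by
  have sq_dvd {u v : ℤ} (h : u ≡ v [ZMOD p]) : (p : ℤ) * p ∣ v ^ p - u ^ p := by
    simpa [pow_two] using dvd_sub_pow_of_dvd_sub h.dvd 1
  have hsq := dvd_sub (dvd_sub (sq_dvd (hx.add hy)) (sq_dvd hx)) (sq_dvd hy)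
  rw [Int.modEq_iff_dvd, ← mul_dvd_mul_iff_left (Int.natCast_ne_zero.2 hp.out.ne_zero),
    mul_sub, mul_powCarry, mul_powCarry]
  convert hsq using 1
  ring

def powCarryMod (x y : ZMod p) : ZMod p := powCarry p x.val y.val

theorem powCarryMod_intCast (x y : ℤ) : powCarryMod p x y = powCarry p x y := by
  rw [powCarryMod, ZMod.intCast_eq_intCast_iff]
  apply powCarry_modEq <;> rw [← ZMod.intCast_eq_intCast_iff] <;> simp

theorem powCarryMod_comm (x y : ZMod p) : powCarryMod p x y = powCarryMod p y x := by
  obtain ⟨x, rfl⟩ := ZMod.intCast_surjective x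
  obtain ⟨y, rfl⟩ := ZMod.intCast_surjective y
  rw [powCarryMod_intCast, powCarryMod_intCast, powCarry_comm]

theorem powCarryMod_add_add (x y z : ZMod p) :
    powCarryMod p x y + powCarryMod p (x + y) z = powCarryMod p y z + powCarryMod p x (y + z) := by
  obtain ⟨x, rfl⟩ := ZMod.intCast_surjective x
  obtain ⟨y, rfl⟩ := ZMod.intCast_surjective y
  obtain ⟨z, rfl⟩ := ZMod.intCast_surjective z
  simp only [← Int.cast_add, powCarryMod_intCast, powCarry_add_add]

theorem powCarryMod_mul_mul (l x y : ZMod p) :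
    powCarryMod p (l * x) (l * y) = l * powCarryMod p x y := by
  obtain ⟨l, rfl⟩ := ZMod.intCast_surjective l
  obtain ⟨x, rfl⟩ := ZMod.intCast_surjective x
  obtain ⟨y, rfl⟩ := ZMod.intCast_surjective y
  simp only [← Int.cast_mul, powCarryMod_intCast, powCarry_mul_mul]
  push_cast
  rw [ZMod.pow_card]

theorem cast_choose_pred : ∀ {k : ℕ}, k < p → (((p - 1).choose k : ℕ) : ZMod p) = (-1) ^ k
  | 0, _ => by simp
  | k + 1, hk => by
    have hpascal := Nat.choose_succ_succ' (p - 1) k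
    rw [Nat.sub_add_cancel hp.out.one_le] at hpascal
    have hzero : ((p.choose (k + 1) : ℕ) : ZMod p) = 0 :=
      (ZMod.natCast_eq_zero_iff _ _).2 (hp.out.dvd_choose_self k.succ_ne_zero hk)
    rw [hpascal, Nat.cast_add, cast_choose_pred (by omega)] at hzero
    rw [pow_succ]
    linear_combination hzero

theorem cast_choose_div {k : ℕ} (hk0 : 0 < k) (hk : k < p) :
    ((p.choose k / p : ℕ) : ZMod p) = (-1) ^ (k + 1) / k := by
  obtain ⟨j, rfl⟩ : ∃ j, k = j + 1 := ⟨k - 1, by omega⟩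
  obtain ⟨c, hc⟩ := hp.out.dvd_choose_self hk0.ne' hk
  have hchoose : (p - 1).choose j = c * (j + 1) := by
    have h := Nat.add_one_mul_choose_eq (p - 1) j
    rw [Nat.sub_add_cancel hp.out.one_le, hc, mul_assoc] at h
    exact Nat.eq_of_mul_eq_mul_left hp.out.pos h
  have hk' : ((j + 1 : ℕ) : ZMod p) ≠ 0 := by
    rw [Ne, ZMod.natCast_eq_zero_iff]
    exact Nat.not_dvd_of_pos_of_lt hk0 hk
  rw [eq_div_iff hk', hc, Nat.mul_div_cancel_left _ hp.out.pos]
  have h := congrArg (fun m : ℕ => (m : ZMod p)) hchoose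
  simp only [cast_choose_pred p (by omega : j < p), Nat.cast_mul, Nat.cast_add, Nat.cast_one] at h
  push_cast
  rw [← h]
  ring

theorem one_sub_pow_of_odd (hodd : Odd p) (n : ℤ) :
    (1 - n) ^ p = 1 + ∑ k ∈ Finset.Icc 1 (p - 1), (-n) ^ k * (p.choose k : ℤ) - n ^ p := by
  have hIco : Finset.Ico 1 p = Finset.Icc 1 (p - 1) := by
    rw [← Finset.Ico_add_one_right_eq_Icc, Nat.sub_add_cancel hp.out.one_le]
  rw [sub_eq_neg_add, add_pow, Finset.sum_range_succ, Finset.range_eq_Ico,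
    Finset.sum_eq_sum_Ico_succ_bot hp.out.pos, hIco, Nat.choose_self, hodd.neg_pow]
  simp only [one_pow, mul_one, pow_zero, Nat.choose_zero_right, Nat.cast_one]
  ring

theorem powCarry_self_one_sub (hodd : Odd p) (n : ℤ) :
    powCarry p n (1 - n) =
      ∑ k ∈ Finset.Icc 1 (p - 1), (-1) ^ (k + 1) * ((p.choose k / p : ℕ) : ℤ) * n ^ k := by
  apply mul_left_cancel₀ (Int.natCast_ne_zero.2 hp.out.ne_zero)
  have hterm : ∀ k ∈ Finset.Icc 1 (p - 1),
      p * ((-1) ^ (k + 1) * ((p.choose k / p : ℕ) : ℤ) * n ^ k) = -((-n) ^ k * p.choose k) := by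
    intro k hk
    rw [Finset.mem_Icc] at hk
    obtain ⟨c, hc⟩ := hp.out.dvd_choose_self (by omega : k ≠ 0) (by omega : k < p)
    rw [hc, Nat.mul_div_cancel_left _ hp.out.pos, neg_pow]
    push_cast
    ring
  rw [mul_powCarry, add_sub_cancel, one_pow, one_sub_pow_of_odd p hodd, Finset.mul_sum,
    Finset.sum_congr rfl hterm, Finset.sum_neg_distrib]
  ring

theorem mirimanoff_eq_powCarryMod (hodd : Odd p) (t : ZMod p) :
    mirimanoff p t = powCarryMod p t (1 - t) := by
  obtain ⟨n, rfl⟩ := ZMod.intCast_surjective t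
  rw [← Int.cast_one, ← Int.cast_sub, powCarryMod_intCast, powCarry_self_one_sub p hodd, mirimanoff]
  simp only [Int.cast_sum, Int.cast_mul, Int.cast_pow, Int.cast_neg, Int.cast_one, Int.cast_natCast]
  refine Finset.sum_congr rfl fun k hk => ?_
  rw [Finset.mem_Icc] at hk
  have hsign : ((-1 : ZMod p)) ^ (k + 1) * (-1) ^ (k + 1) = 1 := by
    rw [← mul_pow]
    norm_num
  rw [cast_choose_div p (by omega) (by omega)]
  linear_combination (-(k : ZMod p)⁻¹ * (n : ZMod p) ^ k) * hsign

theorem mul_mirimanoff (hodd : Odd p) (l t : ZMod p) :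
    l * mirimanoff p t = powCarryMod p (l * t) (l - l * t) := by
  rw [mirimanoff_eq_powCarryMod p hodd, ← powCarryMod_mul_mul, mul_sub, mul_one]

end Mirimanoff

theorem mirimanoff_cocycle_relation_general (p : ℕ) [hp : Fact p.Prime] (hodd : Odd p)
    (a b : ZMod p) (hab1 : a * b ≠ 1) :
    (1 - a * b) * mirimanoff p ((1 - b) / (1 - a * b)) + (1 - b) * mirimanoff p a =
    (1 - a * b) * mirimanoff p ((1 - a) / (1 - a * b)) + (1 - a) * mirimanoff p b := by
  open Mirimanoff in
  have hd : 1 - a * b ≠ 0 := sub_ne_zero.2 hab1.symm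
  simp only [mul_mirimanoff p hodd, mul_div_cancel₀ _ hd]
  have h := powCarryMod_add_add p (a * (1 - b)) ((1 - a) * (1 - b)) (b * (1 - a))
  rw [powCarryMod_comm p (1 - a), powCarryMod_comm p ((1 - a) * b)]
  ring_nf at h ⊢
  linear_combination h

theorem mirimanoff_cocycle_relation (p : ℕ) [hp : Fact p.Prime] (hodd : Odd p)
    (a b : ZMod p) (ha0 : a ≠ 0) (ha1 : a ≠ 1) (hb0 : b ≠ 0) (hb1 : b ≠ 1)
    (hab0 : a * b ≠ 0) (hab1 : a * b ≠ 1) :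
    (1 - a * b) * mirimanoff p ((1 - b) / (1 - a * b)) + (1 - b) * mirimanoff p a =
    (1 - a * b) * mirimanoff p ((1 - a) / (1 - a * b)) + (1 - a) * mirimanoff p b :=
  mirimanoff_cocycle_relation_general p (hp := hp) hodd a b hab1
end

section
/- Let p be an odd prime, ζ_p = e^{2πi/p} and ζ_{p²} = e^{2πi/p²}. Let χ be a Dirichlet character modulo p² with values in ℂ such that χ^p is the trivial character, χ is nontrivial, and χ(1 − p) = ζ_p. For a Dirichlet character ψ modulo p², let τ(ψ) = ∑_{x mod p²} ψ(x)·ζ_{p²}^x denote its Gauss sum. Then for all integers k, l with k ≢ 0, l ≢ 0 and k + l ≢ 0 (mod p), one has τ(χ^k)·τ(χ^l)/τ(χ^{k+l}) = p·ζ_p^{−(k+l)·γ̃}, where γ̃ ∈ {0,...,p−1} is the representative of γ_p(k·(k+l)^{-1}) ∈ 𝔽_p. -/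
/-- The Gauss sum τ(ψ) = ∑_{x mod p²} ψ(x)·ζ_{p²}^x of a Dirichlet character ψ mod p². -/
noncomputable def gaussSumMod (p : ℕ) (ψ : DirichletCharacter ℂ (p ^ 2)) : ℂ :=
  ∑ x ∈ Finset.range (p ^ 2),
    ψ (x : ZMod (p ^ 2)) * Complex.exp (2 * Real.pi * Complex.I * x / (p ^ 2))

/-!
Let `e x = exp (2πi x / p²)` on `ZMod (p²)` and `ζ = exp (2πi / p)`. A character `ψ` mod `p²`
with `ψ ^ p = 1` and `ψ (1 - p) = e (p c)` is `ψ x = e (c (x ^ (p - 1) - 1))` on units, since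
`x ^ (p - 1) = 1 + p y` and `(1 + p y) (1 - p) ^ y = 1` in `ZMod (p²)`. Along a residue class
`x + p s` the summand `ψ · e` of the Gauss sum is then a geometric progression in `s` with ratio
`e (p (1 - c x ^ (p - 2)))`, so only the class of `c` survives and `τ(ψ) = p e (c ^ p)`.

For `ψ = χ ^ k` this gives `τ(χ^k) τ(χ^l) / τ(χ^(k+l)) = p e (k^p + l^p - (k+l)^p) = p ζ ^ (-Q k l)`
where `Q a b = ((a + b) ^ p - a ^ p - b ^ p) / p`. Modulo `p`, `Q` is homogeneous of degree `p`,
and `Q t (1 - t) = -Q (-t) 1 ≡ γ_p t`: the identity holds over `ℤ` for odd `p`, and the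
congruence because `p.choose j / p ≡ (-1) ^ (j - 1) / j`. Hence `Q k l ≡ (k + l) γ_p (k / (k + l))`.
-/

open Finset

theorem add_pow_of_sq_eq_zero {R : Type*} [CommRing R] (x y : R) (hy : y ^ 2 = 0) (n : ℕ) :
    (x + y) ^ n = x ^ n + n * x ^ (n - 1) * y := by
  simpa [Polynomial.derivative_X_pow] using
    Polynomial.eval_add_of_sq_eq_zero (Polynomial.X ^ n) x y hy

theorem Finset.sum_range_mul {M : Type*} [AddCommMonoid M] (f : ℕ → M) (m n : ℕ) :
    ∑ x ∈ range (m * n), f x = ∑ a ∈ range m, ∑ b ∈ range n, f (b + n * a) := by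
  rw [← Fin.sum_univ_eq_sum_range, ← finProdFinEquiv.sum_comp, Fintype.sum_prod_type]
  simp [← Fin.sum_univ_eq_sum_range]

theorem MulChar.zpow_apply_of_isUnit {R R' : Type*} [CommMonoid R] [Field R'] (χ : MulChar R R')
    (n : ℤ) {a : R} (ha : IsUnit a) : (χ ^ n) a = χ a ^ n := by
  obtain ⟨u, rfl⟩ := ha
  obtain ⟨m, rfl | rfl⟩ := Int.eq_nat_or_neg n
  · simp [pow_apply_coe]
  · simp [inv_apply_eq_inv', pow_apply_coe]

section Binomial

variable {R : Type*} [CommRing R] {p : ℕ}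

/-- `((a + b) ^ p - a ^ p - b ^ p) / p`, as a polynomial that makes sense in any ring. -/
def binomialQuotient (p : ℕ) (a b : R) : R :=
  ∑ j ∈ Icc 1 (p - 1), ((p.choose j / p : ℕ) : R) * a ^ j * b ^ (p - j)

theorem natCast_mul_binomialQuotient (hp : p.Prime) (a b : R) :
    p * binomialQuotient p a b = (a + b) ^ p - a ^ p - b ^ p := by
  have hIcc : Icc 1 (p - 1) = Ico 1 p := by
    rw [← Ico_add_one_right_eq_Icc, Nat.sub_add_cancel hp.one_le]
  rw [add_pow, sum_range_succ, range_eq_Ico, sum_eq_sum_Ico_succ_bot hp.pos, binomialQuotient,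
    hIcc, mul_sum]
  simp only [pow_zero, Nat.sub_zero, Nat.choose_zero_right, Nat.cast_one, one_mul, mul_one,
    Nat.sub_self, Nat.choose_self]
  have hterm : ∀ j ∈ Ico 1 p, (p : R) * (((p.choose j / p : ℕ) : R) * a ^ j * b ^ (p - j)) =
      a ^ j * b ^ (p - j) * p.choose j := fun j hj => by
    rw [← mul_assoc, ← mul_assoc, ← Nat.cast_mul,
      Nat.mul_div_cancel' (hp.dvd_choose_self (by grind) (by grind))]
    ring
  rw [sum_congr rfl hterm]
  ring

theorem intCast_binomialQuotient (a b : ℤ) :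
    ((binomialQuotient p a b : ℤ) : R) = binomialQuotient p (a : R) b := by
  simp only [binomialQuotient, Int.cast_sum, Int.cast_mul, Int.cast_pow, Int.cast_natCast]

theorem binomialQuotient_mul_mul (m a b : R) :
    binomialQuotient p (m * a) (m * b) = m ^ p * binomialQuotient p a b := by
  rw [binomialQuotient, binomialQuotient, mul_sum]
  refine sum_congr rfl fun j hj => ?_
  rw [mul_pow, mul_pow, ← pow_mul_pow_sub m (show j ≤ p by grind)]
  ring

theorem binomialQuotient_sub_eq_neg (hp : p.Prime) (hodd : Odd p) (t : ℤ) :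
    binomialQuotient p t (1 - t) = -binomialQuotient p (-t) 1 := by
  refine mul_left_cancel₀ (show (p : ℤ) ≠ 0 by exact_mod_cast hp.ne_zero) ?_
  rw [mul_neg, natCast_mul_binomialQuotient hp, natCast_mul_binomialQuotient hp, hodd.neg_pow]
  ring

end Binomial

section ZModPrime

variable {p : ℕ} [Fact p.Prime]

theorem natCast_sub_one_choose (i : ℕ) (hi : i < p) :
    ((p - 1).choose i : ZMod p) = (-1) ^ i := by
  have hp := (Fact.out : p.Prime)
  induction i with
  | zero => simp
  | succ i ih =>
    have hpascal := Nat.choose_succ_succ' (p - 1) i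
    rw [Nat.sub_add_cancel hp.one_le] at hpascal
    have h0 : (p.choose (i + 1) : ZMod p) = 0 :=
      (ZMod.natCast_eq_zero_iff _ _).2 (hp.dvd_choose_self (by omega) hi)
    rw [hpascal, Nat.cast_add, ih (by omega)] at h0
    rw [pow_succ]
    linear_combination h0

theorem natCast_choose_succ_div (i : ℕ) (hi : i + 1 < p) :
    ((p.choose (i + 1) / p : ℕ) : ZMod p) = (-1) ^ i * ((i + 1 : ℕ) : ZMod p)⁻¹ := by
  have hp := (Fact.out : p.Prime)
  have hdiv : (p - 1).choose i = p.choose (i + 1) / p * (i + 1) := by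
    have h := Nat.add_one_mul_choose_eq (p - 1) i
    rw [Nat.sub_add_cancel hp.one_le,
      ← Nat.mul_div_cancel' (hp.dvd_choose_self i.succ_ne_zero hi), mul_assoc] at h
    exact Nat.eq_of_mul_eq_mul_left hp.pos h
  have hi0 : ((i + 1 : ℕ) : ZMod p) ≠ 0 := by
    rw [Ne, ZMod.natCast_eq_zero_iff]
    exact Nat.not_dvd_of_pos_of_lt i.succ_pos hi
  rw [eq_mul_inv_iff_mul_eq₀ hi0, ← Nat.cast_mul, ← hdiv, natCast_sub_one_choose i (by omega)]

theorem binomialQuotient_neg_one (t : ZMod p) :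
    binomialQuotient p (-t) 1 = -mirimanoff p t := by
  rw [binomialQuotient, mirimanoff, ← sum_neg_distrib]
  refine sum_congr rfl fun j hj => ?_
  obtain ⟨i, rfl⟩ : ∃ i, j = i + 1 := ⟨j - 1, by grind⟩
  rw [natCast_choose_succ_div i (by grind), neg_pow, one_pow, mul_one]
  have : ((-1 : ZMod p) ^ i) ^ 2 = 1 := by rw [← pow_mul, mul_comm, pow_mul]; simp
  linear_combination (-((i + 1 : ℕ) : ZMod p)⁻¹ * t ^ (i + 1)) * this

theorem binomialQuotient_sub_eq_mirimanoff (hodd : Odd p) (t : ZMod p) :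
    binomialQuotient p t (1 - t) = mirimanoff p t := by
  have h := congrArg (Int.cast : ℤ → ZMod p)
    (binomialQuotient_sub_eq_neg Fact.out hodd (t.val : ℤ))
  simp only [intCast_binomialQuotient, Int.cast_neg, Int.cast_sub, Int.cast_one, Int.cast_natCast,
    ZMod.natCast_zmod_val] at h
  rw [h, binomialQuotient_neg_one, neg_neg]

theorem binomialQuotient_eq_mul_mirimanoff (hodd : Odd p) (a b : ZMod p) (hab : a + b ≠ 0) :
    binomialQuotient p a b = (a + b) * mirimanoff p (a * (a + b)⁻¹) := by
  calc binomialQuotient p a b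
      = binomialQuotient p ((a + b) * (a * (a + b)⁻¹)) ((a + b) * (1 - a * (a + b)⁻¹)) := by
        congr 1 <;> field_simp; ring
    _ = (a + b) * mirimanoff p (a * (a + b)⁻¹) := by
        rw [binomialQuotient_mul_mul, ZMod.pow_card, binomialQuotient_sub_eq_mirimanoff hodd]

end ZModPrime

section ZModSq

variable {p : ℕ}

def reduceModP (p : ℕ) : ZMod (p ^ 2) →+* ZMod p :=
  ZMod.castHom (dvd_pow_self p two_ne_zero) (ZMod p)

theorem natCast_sq_eq_zero : (p : ZMod (p ^ 2)) ^ 2 = 0 := by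
  exact_mod_cast ZMod.natCast_self (p ^ 2)

theorem one_sub_natCast_pow (n : ℕ) : (1 - (p : ZMod (p ^ 2))) ^ n = 1 - n * p := by
  simpa [sub_eq_add_neg] using
    add_pow_of_sq_eq_zero 1 (-(p : ZMod (p ^ 2))) (by rw [neg_sq, natCast_sq_eq_zero]) n

variable [NeZero p]

theorem reduceModP_eq_zero_iff {z : ZMod (p ^ 2)} :
    reduceModP p z = 0 ↔ (p : ZMod (p ^ 2)) ∣ z := by
  constructor
  · intro h
    obtain ⟨q, hq⟩ : p ∣ z.val := by
      rwa [reduceModP, ZMod.castHom_apply, ZMod.cast_eq_val, ZMod.natCast_eq_zero_iff] at h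
    exact ⟨q, by rw [← ZMod.natCast_zmod_val z, hq, Nat.cast_mul]⟩
  · rintro ⟨q, rfl⟩
    simp [reduceModP]

theorem mul_eq_zero_of_reduceModP_eq_zero {x y : ZMod (p ^ 2)} (hx : reduceModP p x = 0)
    (hy : reduceModP p y = 0) : x * y = 0 := by
  obtain ⟨a, rfl⟩ := reduceModP_eq_zero_iff.1 hx
  obtain ⟨b, rfl⟩ := reduceModP_eq_zero_iff.1 hy
  linear_combination (a * b) * natCast_sq_eq_zero

theorem natCast_dvd_sub_of_reduceModP_eq {x y : ZMod (p ^ 2)}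
    (h : reduceModP p x = reduceModP p y) : (p : ZMod (p ^ 2)) ∣ x - y :=
  reduceModP_eq_zero_iff.1 (by rw [map_sub, h, sub_self])

theorem pow_eq_pow_of_reduceModP_eq {x y : ZMod (p ^ 2)} (h : reduceModP p x = reduceModP p y) :
    x ^ p = y ^ p := by
  have := dvd_sub_pow_of_dvd_sub (natCast_dvd_sub_of_reduceModP_eq h) 1
  rwa [pow_one, one_add_one_eq_two, natCast_sq_eq_zero, zero_dvd_iff, sub_eq_zero] at this

theorem natCast_mul_eq_of_reduceModP_eq {x y : ZMod (p ^ 2)}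
    (h : reduceModP p x = reduceModP p y) : (p : ZMod (p ^ 2)) * x = p * y := by
  obtain ⟨w, hw⟩ := natCast_dvd_sub_of_reduceModP_eq h
  linear_combination (p : ZMod (p ^ 2)) * hw + w * natCast_sq_eq_zero

theorem stdAddChar_natCast_mul_intCast (n : ℤ) :
    ZMod.stdAddChar ((p : ZMod (p ^ 2)) * (n : ZMod (p ^ 2))) =
      Complex.exp (2 * Real.pi * Complex.I / p) ^ n := by
  have hp : (p : ℂ) ≠ 0 := NeZero.ne _
  rw [← Int.cast_natCast, ← Int.cast_mul, ZMod.stdAddChar_coe, ← Complex.exp_int_mul]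
  congr 1
  push_cast
  field_simp

theorem gaussSumMod_eq_sum_stdAddChar (ψ : DirichletCharacter ℂ (p ^ 2)) :
    gaussSumMod p ψ = ∑ x ∈ range (p ^ 2), ψ x * ZMod.stdAddChar (x : ZMod (p ^ 2)) := by
  refine sum_congr rfl fun x _ => ?_
  rw [← Int.cast_natCast, ZMod.stdAddChar_coe]
  push_cast
  rfl

variable [Fact p.Prime]

theorem natCast_dvd_pow_sub_one {x : ZMod (p ^ 2)} (hx : reduceModP p x ≠ 0) :
    (p : ZMod (p ^ 2)) ∣ x ^ (p - 1) - 1 := by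
  rw [← reduceModP_eq_zero_iff, map_sub, map_pow, ZMod.pow_card_sub_one_eq_one hx, map_one,
    sub_self]

theorem isUnit_iff_reduceModP_ne_zero {x : ZMod (p ^ 2)} : IsUnit x ↔ reduceModP p x ≠ 0 := by
  refine ⟨fun hx => (hx.map (reduceModP p)).ne_zero, fun hx => ?_⟩
  obtain ⟨y, hy⟩ := natCast_dvd_pow_sub_one hx
  have hpow : x * x ^ (p - 2) = x ^ (p - 1) := by
    rw [← pow_succ']
    congr 1
    have := (Fact.out : p.Prime).two_le
    omega
  refine IsUnit.of_mul_eq_one (x ^ (p - 2) * (1 - p * y)) ?_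
  linear_combination (1 - p * y) * hpow + (1 - p * y) * hy - y ^ 2 * natCast_sq_eq_zero

theorem stdAddChar_natCast_mul_eq_one_iff (z : ZMod (p ^ 2)) :
    ZMod.stdAddChar ((p : ZMod (p ^ 2)) * z) = 1 ↔ reduceModP p z = 0 := by
  obtain ⟨n, rfl⟩ := ZMod.intCast_surjective z
  rw [stdAddChar_natCast_mul_intCast, map_intCast, ZMod.intCast_zmod_eq_zero_iff_dvd,
    (Complex.isPrimitiveRoot_exp p (NeZero.ne p)).zpow_eq_one_iff_dvd]

theorem DirichletCharacter.apply_eq_stdAddChar (ψ : DirichletCharacter ℂ (p ^ 2))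
    (c : ZMod (p ^ 2)) (hψp : ψ ^ p = 1)
    (hψ : ψ (1 - (p : ZMod (p ^ 2))) = ZMod.stdAddChar ((p : ZMod (p ^ 2)) * c))
    {x : ZMod (p ^ 2)} (hx : IsUnit x) :
    ψ x = ZMod.stdAddChar (c * (x ^ (p - 1) - 1)) := by
  obtain ⟨y, hy⟩ := natCast_dvd_pow_sub_one (isUnit_iff_reduceModP_ne_zero.1 hx)
  have hinv : x ^ (p - 1) * (1 - p) ^ y.val = 1 := by
    rw [one_sub_natCast_pow, ZMod.natCast_zmod_val]
    linear_combination (1 - y * p) * hy - y ^ 2 * natCast_sq_eq_zero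
  have hpow : ψ x ^ (p - 1) * ZMod.stdAddChar (c * (x ^ (p - 1) - 1)) = 1 := by
    have h := congrArg ψ hinv
    rw [map_mul, map_pow, map_pow, hψ, MulChar.map_one, ← AddChar.map_nsmul_eq_pow, nsmul_eq_mul,
      ZMod.natCast_zmod_val] at h
    rw [hy, ← h]
    ring_nf
  calc ψ x = ψ x * (ψ x ^ (p - 1) * ZMod.stdAddChar (c * (x ^ (p - 1) - 1))) := by
        rw [hpow, mul_one]
    _ = ψ x ^ p * ZMod.stdAddChar (c * (x ^ (p - 1) - 1)) := by
        rw [← mul_assoc, ← pow_succ', Nat.sub_add_cancel NeZero.one_le]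
    _ = ZMod.stdAddChar (c * (x ^ (p - 1) - 1)) := by
        rw [← MulChar.pow_apply' ψ (NeZero.ne p), hψp, MulChar.one_apply hx, one_mul]

theorem stdAddChar_natCast_mul_one_sub_eq_one_iff {x c : ZMod (p ^ 2)} (hx : reduceModP p x ≠ 0) :
    ZMod.stdAddChar ((p : ZMod (p ^ 2)) * (1 - c * x ^ (p - 2))) = 1 ↔
      reduceModP p x = reduceModP p c := by
  have hinv : reduceModP p x ^ (p - 2) = (reduceModP p x)⁻¹ := by
    refine eq_inv_of_mul_eq_one_left ?_
    rw [← pow_succ, ← ZMod.pow_card_sub_one_eq_one hx]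
    congr 1
    have := (Fact.out : p.Prime).two_le
    omega
  rw [stdAddChar_natCast_mul_eq_one_iff, map_sub, map_one, map_mul, map_pow, hinv, sub_eq_zero,
    eq_comm, mul_inv_eq_one₀ hx, eq_comm]

theorem mul_pow_sub_one_sub_one_add_eq_pow {x c : ZMod (p ^ 2)} (hx : reduceModP p x ≠ 0)
    (hxc : reduceModP p x = reduceModP p c) : c * (x ^ (p - 1) - 1) + x = c ^ p := by
  have h1 : (c - x) * (x ^ (p - 1) - 1) = 0 :=
    mul_eq_zero_of_reduceModP_eq_zero (by rw [map_sub, hxc, sub_self])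
      (reduceModP_eq_zero_iff.2 (natCast_dvd_pow_sub_one hx))
  have h2 : x * x ^ (p - 1) = x ^ p := by rw [← pow_succ', Nat.sub_add_cancel NeZero.one_le]
  linear_combination h1 + h2 + pow_eq_pow_of_reduceModP_eq hxc

section GaussSum

variable (ψ : DirichletCharacter ℂ (p ^ 2)) (c : ZMod (p ^ 2)) (hc : IsUnit c)
  (hψ : ∀ x, IsUnit x → ψ x = ZMod.stdAddChar (c * (x ^ (p - 1) - 1)))
include hc hψ

theorem sum_residueClass_mul_stdAddChar (x : ZMod (p ^ 2)) :
    ∑ s ∈ range p, ψ (x + (p : ZMod (p ^ 2)) * (s : ZMod (p ^ 2))) *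
        ZMod.stdAddChar (x + (p : ZMod (p ^ 2)) * (s : ZMod (p ^ 2))) =
      if reduceModP p x = reduceModP p c then p * ZMod.stdAddChar (c ^ p) else 0 := by
  have hred (s : ℕ) : reduceModP p (x + p * s) = reduceModP p x := by simp
  by_cases hx : reduceModP p x = 0
  · rw [if_neg (by rw [hx]; exact (isUnit_iff_reduceModP_ne_zero.1 hc).symm)]
    refine sum_eq_zero fun s _ => ?_
    rw [MulChar.map_nonunit ψ (by rw [isUnit_iff_reduceModP_ne_zero, hred, hx, not_not]), zero_mul]
  set ω := ZMod.stdAddChar ((p : ZMod (p ^ 2)) * (1 - c * x ^ (p - 2))) with hω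
  -- `(x + p s) ^ (p - 1) = x ^ (p - 1) - p s x ^ (p - 2)` because `p ^ 2 = 0` in `ZMod (p ^ 2)`
  have hterm (s : ℕ) : ψ (x + (p : ZMod (p ^ 2)) * (s : ZMod (p ^ 2))) *
      ZMod.stdAddChar (x + (p : ZMod (p ^ 2)) * (s : ZMod (p ^ 2))) =
        ZMod.stdAddChar (c * (x ^ (p - 1) - 1) + x) * ω ^ s := by
    have hsq : ((p : ZMod (p ^ 2)) * s) ^ 2 = 0 := by rw [mul_pow, natCast_sq_eq_zero, zero_mul]
    have hp2 : p - 1 - 1 = p - 2 := by omega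
    rw [hψ _ (isUnit_iff_reduceModP_ne_zero.2 (by rwa [hred])), ← AddChar.map_add_eq_mul, hω,
      ← AddChar.map_nsmul_eq_pow, ← AddChar.map_add_eq_mul, add_pow_of_sq_eq_zero _ _ hsq,
      Nat.cast_pred (Fact.out : p.Prime).pos, nsmul_eq_mul, hp2]
    congr 1
    linear_combination (c * x ^ (p - 2) * (s : ZMod (p ^ 2))) * natCast_sq_eq_zero
  rw [sum_congr rfl fun s _ => hterm s, ← mul_sum]
  split_ifs with hxc
  · rw [show ω = 1 from (stdAddChar_natCast_mul_one_sub_eq_one_iff hx).2 hxc,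
      mul_pow_sub_one_sub_one_add_eq_pow hx hxc]
    simp [mul_comm]
  · have hω1 : ω ≠ 1 := (stdAddChar_natCast_mul_one_sub_eq_one_iff hx).not.2 hxc
    have hωp : ω ^ p = 1 := by
      rw [hω, ← AddChar.map_nsmul_eq_pow, nsmul_eq_mul, ← mul_assoc, ← sq, natCast_sq_eq_zero,
        zero_mul, AddChar.map_zero_eq_one]
    rw [geom_sum_eq hω1, hωp, sub_self, zero_div, mul_zero]

theorem gaussSumMod_eq_of_apply_eq : gaussSumMod p ψ = p * ZMod.stdAddChar (c ^ p) := by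
  calc gaussSumMod p ψ = ∑ x ∈ range (p ^ 2), ψ x * ZMod.stdAddChar (x : ZMod (p ^ 2)) :=
        gaussSumMod_eq_sum_stdAddChar ψ
    _ = ∑ b ∈ range p, ∑ s ∈ range p,
          ψ ((b : ZMod (p ^ 2)) + (p : ZMod (p ^ 2)) * (s : ZMod (p ^ 2))) *
            ZMod.stdAddChar ((b : ZMod (p ^ 2)) + (p : ZMod (p ^ 2)) * (s : ZMod (p ^ 2))) := by
        have h := sum_range_mul (fun x : ℕ ↦ ψ x * ZMod.stdAddChar (x : ZMod (p ^ 2))) p p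
        rw [← sq] at h
        rw [h, sum_comm]
        push_cast
        rfl
    _ = ∑ b ∈ range p,
          if (b : ZMod p) = reduceModP p c then p * ZMod.stdAddChar (c ^ p) else 0 :=
        sum_congr rfl fun b _ => by rw [sum_residueClass_mul_stdAddChar ψ c hc hψ, map_natCast]
    _ = p * ZMod.stdAddChar (c ^ p) := by
        rw [sum_eq_single_of_mem (reduceModP p c).val (mem_range.2 (ZMod.val_lt _)),
          if_pos (ZMod.natCast_zmod_val _)]
        intro b hb hne
        rw [if_neg]
        rintro h
        exact hne (by rw [← h, ZMod.val_natCast_of_lt (mem_range.1 hb)])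

end GaussSum
end ZModSq

theorem gaussSumMod_zpow_eq {p : ℕ} [Fact p.Prime] (χ : DirichletCharacter ℂ (p ^ 2))
    (hχp : χ ^ p = 1)
    (hnorm : χ ((1 : ZMod (p ^ 2)) - (p : ZMod (p ^ 2))) =
      Complex.exp (2 * Real.pi * Complex.I / p))
    (n : ℤ) (hn : (n : ZMod p) ≠ 0) :
    gaussSumMod p (χ ^ n) = p * ZMod.stdAddChar ((n : ZMod (p ^ 2)) ^ p) := by
  refine gaussSumMod_eq_of_apply_eq _ _
    (isUnit_iff_reduceModP_ne_zero.2 (by rwa [map_intCast])) fun x hx => ?_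
  refine DirichletCharacter.apply_eq_stdAddChar _ _ ?_ ?_ hx
  · rw [← zpow_natCast, ← zpow_mul, mul_comm, zpow_mul, zpow_natCast, hχp, one_zpow]
  · rw [MulChar.zpow_apply_of_isUnit _ _ (isUnit_iff_reduceModP_ne_zero.2 (by simp)), hnorm,
      stdAddChar_natCast_mul_intCast]

theorem gaussSum_factor_system_general (p : ℕ) (hp : p.Prime) (hodd : Odd p)
    (χ : DirichletCharacter ℂ (p ^ 2))
    (hχp : χ ^ p = 1)
    (hnorm : χ ((1 : ZMod (p ^ 2)) - (p : ZMod (p ^ 2))) =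
      Complex.exp (2 * Real.pi * Complex.I / p))
    (k l : ℤ) (hk : ¬ (p : ℤ) ∣ k) (hl : ¬ (p : ℤ) ∣ l) (hkl : ¬ (p : ℤ) ∣ (k + l)) :
    gaussSumMod p (χ ^ k) * gaussSumMod p (χ ^ l) / gaussSumMod p (χ ^ (k + l)) =
      (p : ℂ) * Complex.exp (2 * Real.pi * Complex.I / p) ^
        (-(k + l) * ((mirimanoff p ((k : ZMod p) * ((k : ZMod p) + (l : ZMod p))⁻¹)).val : ℤ)) := by
  have := Fact.mk hp
  set γ := mirimanoff p ((k : ZMod p) * ((k : ZMod p) + (l : ZMod p))⁻¹) with hγ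
  have hτ (n : ℤ) (hn : ¬ (p : ℤ) ∣ n) := gaussSumMod_zpow_eq χ hχp hnorm n
    ((ZMod.intCast_zmod_eq_zero_iff_dvd n p).not.2 hn)
  have hkl' : (k : ZMod p) + l ≠ 0 := by
    simpa using (ZMod.intCast_zmod_eq_zero_iff_dvd (k + l) p).not.2 hkl
  have hQ : ((k : ZMod (p ^ 2)) ^ p + (l : ZMod (p ^ 2)) ^ p - ((k + l : ℤ) : ZMod (p ^ 2)) ^ p) =
      p * ((-binomialQuotient p k l : ℤ) : ZMod (p ^ 2)) := by
    push_cast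
    rw [intCast_binomialQuotient]
    linear_combination natCast_mul_binomialQuotient hp (k : ZMod (p ^ 2)) l
  have hQγ : reduceModP p ((-binomialQuotient p k l : ℤ) : ZMod (p ^ 2)) =
      reduceModP p ((-(k + l) * (γ.val : ℤ) : ℤ) : ZMod (p ^ 2)) := by
    rw [map_intCast, map_intCast]
    simp only [Int.cast_neg, Int.cast_mul, Int.cast_add, Int.cast_natCast, intCast_binomialQuotient,
      ZMod.natCast_zmod_val]
    rw [binomialQuotient_eq_mul_mirimanoff hodd _ _ hkl', hγ]
    ring
  have hne : ZMod.stdAddChar (((k + l : ℤ) : ZMod (p ^ 2)) ^ p) ≠ 0 := by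
    simp [ZMod.stdAddChar_apply]
  rw [hτ k hk, hτ l hl, hτ (k + l) hkl, ← stdAddChar_natCast_mul_intCast,
    ← natCast_mul_eq_of_reduceModP_eq hQγ, ← hQ, AddChar.map_sub_eq_div, AddChar.map_add_eq_mul]
  field_simp

theorem gaussSum_factor_system (p : ℕ) (hp : p.Prime) (hodd : Odd p)
    (χ : DirichletCharacter ℂ (p ^ 2))
    (hχp : χ ^ p = 1) (hχ : χ ≠ 1)
    (hnorm : χ ((1 : ZMod (p ^ 2)) - (p : ZMod (p ^ 2))) =
      Complex.exp (2 * Real.pi * Complex.I / p))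
    (k l : ℤ) (hk : ¬ (p : ℤ) ∣ k) (hl : ¬ (p : ℤ) ∣ l) (hkl : ¬ (p : ℤ) ∣ (k + l)) :
    gaussSumMod p (χ ^ k) * gaussSumMod p (χ ^ l) / gaussSumMod p (χ ^ (k + l)) =
      (p : ℂ) * Complex.exp (2 * Real.pi * Complex.I / p) ^
        (-(k + l) * ((mirimanoff p ((k : ZMod p) * ((k : ZMod p) + (l : ZMod p))⁻¹)).val : ℤ)) :=
  gaussSum_factor_system_general p hp hodd χ hχp hnorm k l hk hl hkl
end

section
/- There exists N such that for every prime p > N one has κ_p ≤ ⌊√p⌋. -/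
private lemma fq_ne_zero {p : ℕ} (hp : p.Prime) {n : ℤ} (hn : ¬ (p:ℤ) ∣ n)
    (h2 : ¬ ((p:ℤ))^2 ∣ n ^ (p-1) - 1) : fermatQuotient p n ≠ 0 := by
  have hco : IsCoprime n (p:ℤ) :=
    ((Nat.prime_iff_prime_int.mp hp).coprime_iff_not_dvd.mpr hn).symm
  have h1 : (p:ℤ) ∣ n ^ (p-1) - 1 :=
    (Int.ModEq.pow_card_sub_one_eq_one hp hco).symm.dvd
  obtain ⟨c, hc⟩ := h1
  have hp0 : (p:ℤ) ≠ 0 := by exact_mod_cast hp.ne_zero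
  intro h0
  apply h2
  have hfq : fermatQuotient p n = (c % p).toNat := by
    unfold fermatQuotient
    rw [hc, Int.mul_ediv_cancel_left _ hp0]
  rw [hfq] at h0
  have hnn : 0 ≤ c % p := Int.emod_nonneg c hp0
  have : c % p = 0 := by omega
  have hdc : (p:ℤ) ∣ c := Int.dvd_of_emod_eq_zero this
  rw [hc, sq]
  exact mul_dvd_mul_left _ hdc

private lemma pow_add_p {p : ℕ} (hp : p.Prime) (x : ℤ)
    (hx : ((p:ℤ))^2 ∣ x ^ (p-1) - 1) :
    ((p:ℤ))^2 ∣ (x + p) ^ (p-1) - (1 - p * x ^ (p-2)) := by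
  have key := sq_dvd_add_pow_sub_sub (p:ℤ) x (p-1)
  have hcast : ((p - 1 : ℕ) : ℤ) = (p:ℤ) - 1 := by
    exact_mod_cast Nat.cast_sub hp.one_le
  rw [hcast] at key
  have h3 : ((p:ℤ))^2 ∣ (p:ℤ)^2 * x ^ (p-2) := dvd_mul_right _ _
  have h := (key.add hx).add h3
  have heq : (x + p) ^ (p-1) - (1 - p * x ^ (p-2)) =
      ((x + p) ^ (p-1) - x ^ (p-1-1) * p * ((p:ℤ) - 1) - x ^ (p-1)) + (x ^ (p-1) - 1)
        + ((p:ℤ))^2 * x ^ (p-2) := by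
    have : p - 1 - 1 = p - 2 := by omega
    rw [this]; ring
  rw [heq]
  exact h

private lemma pow_p_sub {p : ℕ} (hp : p.Prime) (hodd : Odd p) (h3 : 3 ≤ p) (x : ℤ)
    (hx : ((p:ℤ))^2 ∣ x ^ (p-1) - 1) :
    ((p:ℤ))^2 ∣ ((p:ℤ) - x) ^ (p-1) - (1 + p * x ^ (p-2)) := by
  have heven : Even (p - 1) := by
    obtain ⟨k, hk⟩ := hodd; exact ⟨k, by omega⟩
  have hodd2 : Odd (p - 2) := by
    obtain ⟨k, hk⟩ := hodd; exact ⟨k - 1, by omega⟩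
  have hx' : ((p:ℤ))^2 ∣ (-x) ^ (p-1) - 1 := by rwa [heven.neg_pow]
  have h2 := pow_add_p hp (-x) hx'
  have heq : (-x + (p:ℤ)) ^ (p-1) - (1 - p * (-x) ^ (p-2)) =
      ((p:ℤ) - x) ^ (p-1) - (1 + p * x ^ (p-2)) := by
    rw [hodd2.neg_pow]; ring_nf
  exact heq ▸ h2

theorem kappa_le_sqrt_of_large :
    ∃ N : ℕ, ∀ p : ℕ, p.Prime → p > N → kappa p ≤ p.sqrt := by
  refine ⟨10, fun p hp hgt => ?_⟩
  set m := p.sqrt with hm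
  by_contra hlt
  push_neg at hlt
  -- basic bounds
  have hodd : Odd p := hp.odd_of_ne_two (by omega)
  have hm3 : 3 ≤ m := by
    rw [hm]; exact (Nat.le_sqrt.mpr (by omega))
  have hmm_le : m * m ≤ p := by have := Nat.sqrt_le' p; nlinarith [this]
  have hlt_succ : p < (m + 1) * (m + 1) := by
    have := Nat.lt_succ_sqrt' p
    nlinarith [this]
  have hmm_lt : m * m < p := by
    rcases Nat.lt_or_ge (m*m) p with h | h
    · exact h
    · exfalso
      have : p = m * m := le_antisymm h hmm_le
      have : m ∣ p := ⟨m, this⟩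
      rcases (Nat.Prime.eq_one_or_self_of_dvd hp m this) with h1 | h1 <;> nlinarith
  have hmp : m < p := by nlinarith
  -- every n ≤ m has zero Fermat quotient
  have H : ∀ n : ℕ, 0 < n → n ≤ m → ((p:ℤ))^2 ∣ (n:ℤ) ^ (p-1) - 1 := by
    intro n hn0 hnm
    by_contra hnd
    have hpn : ¬ (p:ℤ) ∣ (n:ℤ) := by
      rw [Int.natCast_dvd_natCast]
      intro hd
      have := Nat.le_of_dvd hn0 hd
      omega
    have hne := fq_ne_zero hp hpn hnd
    have hmem : n ∈ {n : ℕ | 0 < n ∧ ¬ p ∣ n ∧ fermatQuotient p n ≠ 0} := by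
      refine ⟨hn0, ?_, hne⟩
      intro hd
      have := Nat.le_of_dvd hn0 hd
      omega
    have := Nat.sInf_le hmem
    have : kappa p ≤ m := le_trans this hnm
    omega
  -- Fermat mod p for small n
  have Hp : ∀ n : ℕ, 0 < n → n ≤ m → (p:ℤ) ∣ (n:ℤ) ^ (p-1) - 1 := by
    intro n hn0 hnm
    exact (dvd_pow_self (p:ℤ) two_ne_zero).trans (H n hn0 hnm)
  have hp3 : 3 ≤ p := by omega
  have hp0 : (p:ℤ) ≠ 0 := by exact_mod_cast hp.ne_zero
  have hpZ : Prime (p:ℤ) := Nat.prime_iff_prime_int.mp hp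
  have hp2ne : p - 2 ≠ 0 := by omega
  have hmq := H m (by omega) le_rfl
  have h3m : 3 * m ≤ m * m := Nat.mul_le_mul_right m hm3
  obtain ⟨M, hM⟩ : ∃ M, m * m = M := ⟨_, rfl⟩
  rw [hM] at hmm_le hmm_lt h3m
  have hub : p ≤ M + 2 * m := by nlinarith [hlt_succ]
  rcases le_or_gt p (M + m) with hcase | hcase
  · -- Case 1 : m*m < p ≤ m*m + m
    obtain ⟨r, hr1, hrm, hrp⟩ : ∃ r : ℕ, 1 ≤ r ∧ r ≤ m ∧ p = M + r :=
      ⟨p - M, by omega, by omega, by omega⟩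
    have hr := H r hr1 hrm
    have A := pow_p_sub hp hodd hp3 (r:ℤ) hr
    have hz1 : ((p:ℤ) - r) = (m:ℤ) * (m:ℤ) := by
      have hZ := congrArg (Nat.cast : ℕ → ℤ) hrp
      push_cast [← hM] at hZ
      linarith
    rw [hz1] at A
    have B : ((p:ℤ))^2 ∣ ((m:ℤ) * m) ^ (p-1) - 1 := by
      have := hmq.mul_right (((m:ℤ)) ^ (p-1) + 1)
      have heq : ((m:ℤ)) ^ (p-1) * ((m:ℤ) ^ (p-1) + 1) - 1 * ((m:ℤ) ^ (p-1) + 1) + 1 - 1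
          = ((m:ℤ) * m) ^ (p-1) - 1 := by rw [mul_pow]; ring
      calc ((p:ℤ))^2 ∣ ((m:ℤ) ^ (p-1) - 1) * ((m:ℤ) ^ (p-1) + 1) := this
        _ = ((m:ℤ) * m) ^ (p-1) - 1 := by rw [mul_pow]; ring
    have C := B.sub A
    have heqC : ((m:ℤ) * m) ^ (p-1) - 1 - (((m:ℤ) * m) ^ (p-1) - (1 + p * (r:ℤ) ^ (p-2)))
        = (p:ℤ) * ((r:ℤ) ^ (p-2)) := by ring
    rw [heqC, sq] at C
    have hdr : (p:ℤ) ∣ (r:ℤ) ^ (p-2) := (mul_dvd_mul_iff_left hp0).mp C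
    have : (p:ℤ) ∣ (r:ℤ) := hpZ.dvd_of_dvd_pow hdr
    have : p ∣ r := Int.natCast_dvd_natCast.mp this
    have := Nat.le_of_dvd (by omega) this
    omega
  · -- Case 2 : m*m + m < p ≤ m*m + 2m
    obtain ⟨r, hr1, hrm, hrp⟩ : ∃ r : ℕ, 1 ≤ r ∧ r ≤ m ∧ p = M + m + r :=
      ⟨p - M - m, by omega, by omega, by omega⟩
    obtain ⟨s, hs1, hsm, hsp⟩ : ∃ s : ℕ, 1 ≤ s ∧ s ≤ m ∧ s + p = M + 2 * m + 1 :=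
      ⟨M + 2 * m + 1 - p, by omega, by omega, by omega⟩
    have hr := H r hr1 hrm
    have hs := H s hs1 hsm
    have A := pow_p_sub hp hodd hp3 (r:ℤ) hr
    have hz1 : ((p:ℤ) - r) = (m:ℤ) * ((m:ℤ) + 1) := by
      have hZ := congrArg (Nat.cast : ℕ → ℤ) hrp
      push_cast [← hM] at hZ
      linarith
    rw [hz1] at A
    -- A : p^2 ∣ (m*(m+1))^(p-1) - (1 + p*r^(p-2))
    have A2 : ((p:ℤ))^2 ∣ ((m:ℤ) + 1) ^ (p-1) - (1 + (p:ℤ) * (r:ℤ) ^ (p-2)) := by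
      have h := A.sub (hmq.mul_right (((m:ℤ) + 1) ^ (p-1)))
      have heq : ((m:ℤ) * ((m:ℤ) + 1)) ^ (p-1) - (1 + (p:ℤ) * (r:ℤ) ^ (p-2))
          - (((m:ℤ) ^ (p-1) - 1) * (((m:ℤ) + 1) ^ (p-1)))
          = ((m:ℤ) + 1) ^ (p-1) - (1 + (p:ℤ) * (r:ℤ) ^ (p-2)) := by
        rw [mul_pow]; ring
      rwa [heq] at h
    have B := pow_add_p hp (s:ℤ) hs
    have hz2 : ((s:ℤ) + p) = ((m:ℤ) + 1) * ((m:ℤ) + 1) := by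
      have hZ := congrArg (Nat.cast : ℕ → ℤ) hsp
      push_cast [← hM] at hZ
      linarith
    rw [hz2] at B
    have C := B.sub (A2.mul_right (((m:ℤ) + 1) ^ (p-1) + 1 + (p:ℤ) * (r:ℤ) ^ (p-2)))
    have hD : ((p:ℤ))^2 ∣ ((p:ℤ))^2 * ((r:ℤ) ^ (p-2) * (r:ℤ) ^ (p-2)) := dvd_mul_right _ _
    have D := C.sub hD
    have heqD : (((m:ℤ) + 1) * ((m:ℤ) + 1)) ^ (p-1) - (1 - (p:ℤ) * (s:ℤ) ^ (p-2))
        - (((m:ℤ) + 1) ^ (p-1) - (1 + (p:ℤ) * (r:ℤ) ^ (p-2)))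
          * (((m:ℤ) + 1) ^ (p-1) + 1 + (p:ℤ) * (r:ℤ) ^ (p-2))
        - ((p:ℤ))^2 * ((r:ℤ) ^ (p-2) * (r:ℤ) ^ (p-2))
        = (p:ℤ) * ((s:ℤ) ^ (p-2) + 2 * (r:ℤ) ^ (p-2)) := by
      rw [mul_pow]; ring
    rw [heqD, sq] at D
    have hw : (p:ℤ) ∣ (s:ℤ) ^ (p-2) + 2 * (r:ℤ) ^ (p-2) := (mul_dvd_mul_iff_left hp0).mp D
    have hrp' := Hp r hr1 hrm
    have hsp' := Hp s hs1 hsm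
    have E := (hw.mul_right ((r:ℤ) * (s:ℤ))).sub
      ((hsp'.mul_right (r:ℤ)).add (hrp'.mul_right (2 * (s:ℤ))))
    have heqE : ((s:ℤ) ^ (p-2) + 2 * (r:ℤ) ^ (p-2)) * ((r:ℤ) * (s:ℤ))
        - (((s:ℤ) ^ (p-1) - 1) * (r:ℤ) + ((r:ℤ) ^ (p-1) - 1) * (2 * (s:ℤ)))
        = (r:ℤ) + 2 * (s:ℤ) := by
      rw [show p - 1 = (p-2) + 1 from by omega]; ring
    rw [heqE] at E
    have : (p:ℤ) ∣ ((r + 2 * s : ℕ) : ℤ) := by push_cast; exact E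
    have hfin : p ∣ r + 2 * s := Int.natCast_dvd_natCast.mp this
    have := Nat.le_of_dvd (by omega) hfin
    omega
end

section
/- For every odd prime p, κ_p ≤ ⌊(p + 5)/4⌋. -/
lemma binom_aux (a b : ℤ) : ∀ n : ℕ, (b ^ 2 : ℤ) ∣ (a + b) ^ n - (a ^ n + n * a ^ (n - 1) * b)
  | 0 => by simp
  | 1 => by simp
  | (n + 2) => by
    obtain ⟨c, hc⟩ := binom_aux a b (n + 1)
    refine ⟨(a + b) * c + (n + 1) * a ^ n, ?_⟩
    have h1 : (n + 2 : ℕ) - 1 = n + 1 := rfl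
    have h2 : (n + 1 : ℕ) - 1 = n := rfl
    rw [h1] at *
    rw [h2] at hc
    push_cast at hc ⊢
    linear_combination (a + b) * hc

lemma fq_zero_iff (p : ℕ) (hp : p.Prime) (n : ℤ) (hn : ¬ (p : ℤ) ∣ n) :
    fermatQuotient p n = 0 ↔ ((p : ℤ) ^ 2 ∣ n ^ (p - 1) - 1) := by
  have hp0 : (0 : ℤ) < p := by exact_mod_cast hp.pos
  haveI := Fact.mk hp
  have hfermat : (p : ℤ) ∣ n ^ (p - 1) - 1 := by
    have h0 : (n : ZMod p) ≠ 0 := by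
      rwa [Ne, ZMod.intCast_zmod_eq_zero_iff_dvd]
    have hpow := ZMod.pow_card_sub_one_eq_one h0
    have : ((n ^ (p - 1) - 1 : ℤ) : ZMod p) = 0 := by
      push_cast
      rw [hpow]; ring
    exact (ZMod.intCast_zmod_eq_zero_iff_dvd _ _).mp this
  obtain ⟨t, ht⟩ := hfermat
  have hdiv : (n ^ (p - 1) - 1) / p = t := by
    rw [ht]; exact Int.mul_ediv_cancel_left t hp0.ne'
  unfold fermatQuotient
  rw [hdiv, ht, Int.toNat_eq_zero]
  constructor
  · intro h
    have hmod : t % p = 0 := le_antisymm h (Int.emod_nonneg t hp0.ne')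
    have : (p : ℤ) ∣ t := Int.dvd_of_emod_eq_zero hmod
    rw [pow_two]; exact mul_dvd_mul_left _ this
  · intro h
    rw [pow_two] at h
    have : (p : ℤ) ∣ t := (mul_dvd_mul_iff_left hp0.ne').mp h
    simp [Int.emod_emod_of_dvd, Int.emod_eq_zero_of_dvd this]

theorem kappa_le_quarter (p : ℕ) (hp : p.Prime) (hodd : Odd p) :
    kappa p ≤ (p + 5) / 4 := by
  have hodd2 : p % 2 = 1 := Nat.odd_iff.mp hodd
  have hp2 : 2 ≤ p := hp.two_le
  have hp3 : p ≠ 2 := by omega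
  -- small cases
  by_cases hsmall : p < 7
  · have hp35 : p = 3 ∨ p = 5 := by interval_cases p <;> simp_all
    have key : ∃ n ∈ {n : ℕ | 0 < n ∧ ¬ p ∣ n ∧ fermatQuotient p n ≠ 0}, n ≤ (p + 5) / 4 := by
      refine ⟨2, ⟨by norm_num, ?_, ?_⟩, by omega⟩
      · intro h; have := Nat.le_of_dvd (by norm_num) h; omega
      · rcases hp35 with rfl | rfl <;> decide
    obtain ⟨n, hn, hnle⟩ := key
    exact le_trans (Nat.sInf_le hn) hnle
  · push_neg at hsmall
    set k : ℕ := (p + 3) / 4 with hk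
    have hcase : 4 * k = p + 1 ∨ 4 * k = p + 3 := by omega
    set r : ℕ := 4 * k - p with hr
    have hr13 : r = 1 ∨ r = 3 := by omega
    have h4k : 4 * k = p + r := by omega
    have hkpos : 0 < k := by omega
    have hkltp : k < p := by omega
    have hrltp : r < p := by omega
    have hrpos : 0 < r := by omega
    have hbound2 : 2 ≤ (p + 5) / 4 := by omega
    have hboundk : k ≤ (p + 5) / 4 := by omega
    have hboundr : r ≤ (p + 5) / 4 := by omega
    -- non-divisibility facts
    have hnd2 : ¬ p ∣ 2 := fun h => by have := Nat.le_of_dvd (by norm_num) h; omega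
    have hndk : ¬ p ∣ k := fun h => by have := Nat.le_of_dvd hkpos h; omega
    have hndr : ¬ p ∣ r := fun h => by have := Nat.le_of_dvd hrpos h; omega
    have hnd2' : ¬ (p : ℤ) ∣ (2 : ℤ) := by exact_mod_cast fun h => hnd2 (Int.ofNat_dvd.mp (by exact_mod_cast h))
    have hndk' : ¬ (p : ℤ) ∣ (k : ℤ) := by exact_mod_cast hndk
    have hndr' : ¬ (p : ℤ) ∣ (r : ℤ) := by exact_mod_cast hndr
    -- claim: one of 2, k, r is in the set
    have key : ∃ n ∈ {n : ℕ | 0 < n ∧ ¬ p ∣ n ∧ fermatQuotient p n ≠ 0}, n ≤ (p + 5) / 4 := by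
      by_cases h2 : fermatQuotient p 2 = 0
      · by_cases hkq : fermatQuotient p k = 0
        · by_cases hrq : fermatQuotient p r = 0
          · exfalso
            -- derive contradiction
            have d2 : (p : ℤ) ^ 2 ∣ (2 : ℤ) ^ (p - 1) - 1 :=
              (fq_zero_iff p hp 2 hnd2').mp h2
            have dk : (p : ℤ) ^ 2 ∣ (k : ℤ) ^ (p - 1) - 1 :=
              (fq_zero_iff p hp k hndk').mp hkq
            have dr : (p : ℤ) ^ 2 ∣ (r : ℤ) ^ (p - 1) - 1 :=
              (fq_zero_iff p hp r hndr').mp hrq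
            -- (4k)^(p-1) ≡ 1 mod p^2
            have d4k : (p : ℤ) ^ 2 ∣ (4 * k : ℤ) ^ (p - 1) - 1 := by
              obtain ⟨a, ha⟩ := d2
              obtain ⟨b, hb⟩ := dk
              refine ⟨a * ((2:ℤ) ^ (p-1) * (k:ℤ) ^ (p-1)) + a * (k:ℤ) ^ (p-1) + b, ?_⟩
              have : (4 * (k:ℤ)) ^ (p - 1) = (2:ℤ)^(p-1) * (2:ℤ)^(p-1) * (k:ℤ)^(p-1) := by
                rw [show (4 : ℤ) * k = 2 * 2 * k by ring, mul_pow, mul_pow]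
              rw [this]
              linear_combination ((2:ℤ)^(p-1) * (k:ℤ)^(p-1) + (k:ℤ)^(p-1)) * ha + hb
            -- binomial expansion: r = 4k - p
            have hbin := binom_aux (4 * (k:ℤ)) (-(p:ℤ)) (p - 1)
            rw [neg_sq] at hbin
            have hreq : (4 * (k:ℤ)) + (-(p:ℤ)) = (r : ℤ) := by omega
            rw [hreq] at hbin
            -- combine
            have hfinal : (p : ℤ) ^ 2 ∣ ((p - 1 : ℕ) : ℤ) * (4 * (k:ℤ)) ^ (p - 1 - 1) * (p : ℤ) := by
              have := dvd_sub (dvd_sub dr hbin) d4k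
              have heq : (r : ℤ) ^ (p - 1) - 1 -
                  ((r:ℤ) ^ (p - 1) - ((4 * (k:ℤ)) ^ (p - 1) + ((p-1 : ℕ):ℤ) * (4 * (k:ℤ)) ^ (p - 1 - 1) * (-(p:ℤ)))) -
                  ((4 * (k:ℤ)) ^ (p - 1) - 1)
                  = -(((p - 1 : ℕ) : ℤ) * (4 * (k:ℤ)) ^ (p - 1 - 1) * (p : ℤ)) := by ring
              rw [heq] at this
              exact (dvd_neg.mp this)
            have hpne : (p : ℤ) ≠ 0 := by exact_mod_cast hp.pos.ne'
            have hpp : (p : ℤ) ∣ ((p - 1 : ℕ) : ℤ) * (4 * (k:ℤ)) ^ (p - 1 - 1) := by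
              obtain ⟨c, hc⟩ := hfinal
              refine ⟨c, mul_right_cancel₀ hpne ?_⟩
              linear_combination hc
            have hpint : Prime (p : ℤ) := Nat.prime_iff_prime_int.mp hp
            rcases hpint.dvd_mul.mp hpp with h | h
            · -- p ∣ p - 1
              have hc1 : ((p - 1 : ℕ) : ℤ) = (p : ℤ) - 1 := by omega
              rw [hc1] at h
              have hlt : (0:ℤ) < (p : ℤ) - 1 := by omega
              have := Int.le_of_dvd hlt h
              omega
            · have : (p : ℤ) ∣ 4 * (k : ℤ) := hpint.dvd_of_dvd_pow h
              rcases hpint.dvd_mul.mp this with h4 | hkk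
              · have : (p : ℤ) ∣ ((4 : ℕ) : ℤ) := by exact_mod_cast h4
                have : p ∣ 4 := Int.ofNat_dvd.mp (by exact_mod_cast this)
                have := Nat.le_of_dvd (by norm_num) this
                omega
              · exact hndk' hkk
          · exact ⟨r, ⟨hrpos, hndr, hrq⟩, hboundr⟩
        · exact ⟨k, ⟨hkpos, hndk, hkq⟩, hboundk⟩
      · exact ⟨2, ⟨by norm_num, hnd2, h2⟩, hbound2⟩
    obtain ⟨n, hn, hnle⟩ := key
    exact le_trans (Nat.sInf_le hn) hnle
end

section
/- Let p be an odd prime and t an integer. Then p divides 1 − t^p − (1 − t)^p, and the residue class of the integer (1 − t^p − (1 − t)^p)/p modulo p equals γ_p(t mod p) in 𝔽_p. -/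
open Finset

namespace Nat.Prime

variable {p k : ℕ}

theorem cast_choose_sub_one {R : Type*} [Ring R] [CharP R p] (hp : p.Prime) (hk : k < p) :
    (((p - 1).choose k : ℕ) : R) = (-1) ^ k := by
  induction k with
  | zero => simp
  | succ k ih =>
    obtain ⟨n, rfl⟩ : ∃ n, p = n + 1 := ⟨p - 1, (Nat.sub_add_cancel hp.one_le).symm⟩
    have hvanish : (((n + 1).choose (k + 1) : ℕ) : R) = 0 :=
      (CharP.cast_eq_zero_iff R _ _).2 (hp.dvd_choose_self k.succ_ne_zero hk)
    rw [Nat.choose_succ_succ', Nat.cast_add] at hvanish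
    rw [Nat.add_sub_cancel] at ih ⊢
    rw [eq_neg_of_add_eq_zero_right hvanish, ih (by omega), pow_succ]
    simp

theorem choose_div_self_mul (hp : p.Prime) (hk0 : 0 < k) (hkp : k < p) :
    p.choose k / p * k = (p - 1).choose (k - 1) := by
  obtain ⟨n, rfl⟩ : ∃ n, p = n + 1 := ⟨p - 1, (Nat.sub_add_cancel hp.one_le).symm⟩
  obtain ⟨j, rfl⟩ : ∃ j, k = j + 1 := ⟨k - 1, (Nat.sub_add_cancel hk0).symm⟩
  rw [Nat.div_mul_right_comm (hp.dvd_choose_self j.succ_ne_zero hkp), ← Nat.add_one_mul_choose_eq,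
    Nat.mul_div_cancel_left _ hp.pos]
  simp

end Nat.Prime

theorem one_sub_pow_sub_one_sub_pow {R : Type*} [CommRing R] {p : ℕ} (hp : p.Prime)
    (hodd : Odd p) (t : R) :
    1 - t ^ p - (1 - t) ^ p = p * -∑ k ∈ Ioo 0 p, (-t) ^ k * ((p.choose k / p : ℕ) : R) := by
  have hexpand := add_pow_prime_eq' hp (-t) 1
  simp only [one_pow, mul_one, hodd.neg_pow] at hexpand
  rw [sub_eq_neg_add (1 : R) t, hexpand]
  ring

theorem mirimanoff_eq_neg_sum_choose_div {p : ℕ} (hp : p.Prime) (x : ZMod p) :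
    mirimanoff p x = -∑ k ∈ Ioo 0 p, (-x) ^ k * ((p.choose k / p : ℕ) : ZMod p) := by
  have : Fact p.Prime := ⟨hp⟩
  rw [mirimanoff, ← sum_neg_distrib]
  refine sum_congr (Icc_add_one_sub_one_eq_Ioo 0 p) fun k hk => ?_
  obtain ⟨hk0, hkp⟩ := mem_Ioo.1 hk
  have hk_ne : (k : ZMod p) ≠ 0 := by
    rw [Ne, ZMod.natCast_eq_zero_iff]
    exact Nat.not_dvd_of_pos_of_lt hk0 hkp
  have hquot : ((p.choose k / p : ℕ) : ZMod p) = (-1) ^ (k - 1) * (k : ZMod p)⁻¹ := by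
    rw [eq_mul_inv_iff_mul_eq₀ hk_ne, ← Nat.cast_mul, hp.choose_div_self_mul hk0 hkp,
      hp.cast_choose_sub_one (by omega)]
  obtain ⟨j, rfl⟩ : ∃ j, k = j + 1 := ⟨k - 1, (Nat.sub_add_cancel hk0).symm⟩
  have hsign : ((-1 : ZMod p) ^ j) ^ 2 = 1 := by rw [← pow_mul, pow_mul', neg_one_sq, one_pow]
  rw [hquot, neg_pow, Nat.add_sub_cancel]
  linear_combination -(x ^ (j + 1) * ((j + 1 : ℕ) : ZMod p)⁻¹) * hsign

theorem mirimanoff_eq_binomial_quotient (p : ℕ) (hp : p.Prime) (hodd : Odd p) (t : ℤ) :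
    (p : ℤ) ∣ (1 - t ^ p - (1 - t) ^ p) ∧
    (((1 - t ^ p - (1 - t) ^ p) / p : ℤ) : ZMod p) = mirimanoff p (t : ZMod p) := by
  rw [one_sub_pow_sub_one_sub_pow hp hodd t,
    Int.mul_ediv_cancel_left _ (by exact_mod_cast hp.ne_zero), mirimanoff_eq_neg_sum_choose_div hp]
  exact ⟨dvd_mul_right _ _, by
    simp only [Int.cast_mul, Int.cast_neg, Int.cast_sum, Int.cast_pow, Int.cast_natCast]⟩
end

section
/- Let p be an odd prime and t an integer with t ≢ 0 (mod p) and t ≢ 1 (mod p). Then γ_p(t mod p) = ((t − 1)·q_p(t − 1) − t·q_p(t)) mod p in 𝔽_p. -/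
/-!
For odd `p` the binomial theorem gives
`(t - 1) ^ p - t ^ p + 1 = p * ∑_{0 < k < p} (-1) ^ (p - k) (C(p, k) / p) t ^ k`,
and `C(p, k) / p ≡ (-1) ^ (k - 1) / k (mod p)`, so the quotient of the left side by `p` reduces
to `γ_p(t)`. On the other hand `x ^ p = x + p x Q(x)` with `Q(x) = (x ^ (p - 1) - 1) / p ≡ q_p(x)`
whenever `p ∤ x`; applied to `x = t - 1` and `x = t` this makes the same quotient
`(t - 1) Q(t - 1) - t Q(t)`.
-/

open Finset

lemma ZMod.natCast_choose_sub_one (p : ℕ) [Fact p.Prime] {k : ℕ} (hk : k < p) :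
    ((p - 1).choose k : ZMod p) = (-1) ^ k := by
  induction k with
  | zero => simp
  | succ k ih =>
    have hpascal : p.choose (k + 1) = (p - 1).choose k + (p - 1).choose (k + 1) := by
      have := Nat.choose_succ_succ' (p - 1) k
      rwa [Nat.sub_add_cancel (Fact.out : p.Prime).one_le] at this
    have hdvd : (p.choose (k + 1) : ZMod p) = 0 :=
      (ZMod.natCast_eq_zero_iff _ _).mpr ((Fact.out : p.Prime).dvd_choose_self k.succ_ne_zero hk)
    rw [hpascal, Nat.cast_add, ih (by omega)] at hdvd
    linear_combination hdvd

lemma ZMod.natCast_choose_div_self (p : ℕ) [Fact p.Prime] {k : ℕ} (hk0 : 0 < k) (hkp : k < p) :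
    ((p.choose k / p : ℕ) : ZMod p) = (-1) ^ (k - 1) * (k : ZMod p)⁻¹ := by
  have hp : p.Prime := Fact.out
  have hk : (k : ZMod p) ≠ 0 := by
    rw [Ne, ZMod.natCast_eq_zero_iff]
    exact fun h => absurd (Nat.le_of_dvd hk0 h) (by omega)
  have key : (p - 1).choose (k - 1) = p.choose k / p * k := by
    apply Nat.eq_of_mul_eq_mul_left hp.pos
    rw [← mul_assoc, Nat.mul_div_cancel' (hp.dvd_choose_self hk0.ne' hkp)]
    have := Nat.add_one_mul_choose_eq (p - 1) (k - 1)
    rwa [Nat.sub_add_cancel hp.one_le, Nat.sub_add_cancel hk0] at this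
  have := congrArg (Nat.cast : ℕ → ZMod p) key
  rw [Nat.cast_mul, ZMod.natCast_choose_sub_one p (by omega)] at this
  rw [this, mul_inv_cancel_right₀ hk]

lemma natCast_fermatQuotient (p : ℕ) [NeZero p] (x : ℤ) :
    (fermatQuotient p x : ZMod p) = (((x ^ (p - 1) - 1) / p : ℤ) : ZMod p) := by
  rw [← Int.cast_natCast, fermatQuotient,
    Int.toNat_of_nonneg (Int.emod_nonneg _ (by exact_mod_cast NeZero.ne p)), ZMod.intCast_mod]

lemma Int.pow_prime_eq_add_mul_ediv (p : ℕ) [Fact p.Prime] {x : ℤ} (hx : (x : ZMod p) ≠ 0) :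
    x ^ p = x + p * x * ((x ^ (p - 1) - 1) / p) := by
  have hdvd : (p : ℤ) ∣ x ^ (p - 1) - 1 := by
    rw [← ZMod.intCast_zmod_eq_zero_iff_dvd]
    push_cast
    rw [ZMod.pow_card_sub_one_eq_one hx, sub_self]
  rw [← pow_sub_one_mul (Fact.out : p.Prime).ne_zero]
  linear_combination x * (Int.mul_ediv_cancel' hdvd).symm

lemma sub_one_pow_sub_pow_add_one_of_odd {R : Type*} [CommRing R] {n : ℕ} (hn : Odd n) (t : R) :
    (t - 1) ^ n - t ^ n + 1 = ∑ k ∈ Icc 1 (n - 1), t ^ k * (-1) ^ (n - k) * n.choose k := by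
  rw [sub_eq_add_neg t, add_pow, sum_range_succ, range_eq_Ico, sum_eq_sum_Ico_succ_bot hn.pos,
    ← Icc_sub_one_right_eq_Ico_of_not_isMin (by simpa using hn.pos.ne')]
  simp only [pow_zero, Nat.choose_zero_right, Nat.cast_one, mul_one, one_mul, Nat.sub_zero,
    Nat.sub_self, Nat.choose_self, hn.neg_one_pow]
  ring

lemma Int.sub_one_pow_sub_pow_add_one_eq_prime_mul (p : ℕ) [Fact p.Prime] (hodd : Odd p)
    (t : ℤ) :
    (t - 1) ^ p - t ^ p + 1 =
      p * ∑ k ∈ Icc 1 (p - 1), t ^ k * (-1) ^ (p - k) * (p.choose k / p : ℕ) := by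
  rw [sub_one_pow_sub_pow_add_one_of_odd hodd, mul_sum]
  refine sum_congr rfl fun k hk => ?_
  rw [mem_Icc] at hk
  have hdvd :=
    Nat.mul_div_cancel' ((Fact.out : p.Prime).dvd_choose_self (by omega) (by omega : k < p))
  rw [show (p.choose k : ℤ) = p * (p.choose k / p : ℕ) by exact_mod_cast hdvd.symm]
  ring

lemma mirimanoff_eq_sum_choose_div (p : ℕ) [Fact p.Prime] (t : ZMod p) :
    mirimanoff p t =
      ∑ k ∈ Icc 1 (p - 1), t ^ k * (-1) ^ (p - k) * ((p.choose k / p : ℕ) : ZMod p) := by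
  refine sum_congr rfl fun k hk => ?_
  rw [mem_Icc] at hk
  -- the signs combine to `(-1) ^ (p - 1) = 1` by Fermat's little theorem
  have hsign : (-1 : ZMod p) ^ (p - k) * (-1) ^ (k - 1) = 1 := by
    rw [← pow_add, show p - k + (k - 1) = p - 1 by omega,
      ZMod.pow_card_sub_one_eq_one (neg_ne_zero.mpr one_ne_zero)]
  rw [ZMod.natCast_choose_div_self p (by omega) (by omega)]
  linear_combination (-(t ^ k * (k : ZMod p)⁻¹)) * hsign

theorem mirimanoff_eq_fermatQuotient (p : ℕ) (hp : p.Prime) (hodd : Odd p)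
    (t : ℤ) (ht0 : (t : ZMod p) ≠ 0) (ht1 : (t : ZMod p) ≠ 1) :
    mirimanoff p (t : ZMod p) =
      (((t - 1) * fermatQuotient p (t - 1) - t * fermatQuotient p t : ℤ) : ZMod p) := by
  have : Fact p.Prime := ⟨hp⟩
  have ht1' : ((t - 1 : ℤ) : ZMod p) ≠ 0 := by
    push_cast
    exact sub_ne_zero.mpr ht1
  have hfermat : (t - 1) ^ p - t ^ p + 1 =
      p * ((t - 1) * (((t - 1) ^ (p - 1) - 1) / p) - t * ((t ^ (p - 1) - 1) / p)) := by
    rw [Int.pow_prime_eq_add_mul_ediv p ht1', Int.pow_prime_eq_add_mul_ediv p ht0]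
    ring
  rw [Int.sub_one_pow_sub_pow_add_one_eq_prime_mul p hodd] at hfermat
  have hquot :=
    congrArg ((↑) : ℤ → ZMod p) (mul_left_cancel₀ (by exact_mod_cast hp.ne_zero) hfermat)
  push_cast [-Int.natCast_ediv] at hquot ⊢
  rw [mirimanoff_eq_sum_choose_div, hquot, natCast_fermatQuotient, natCast_fermatQuotient]
end

section
/- Let p be an odd prime. For every a ∈ 𝔽_p, γ_p(a) = γ_p(1 − a) in 𝔽_p. -/
open Finset in
lemma miri_sum_univ (p : ℕ) (hp : p.Prime) (hodd : Odd p) :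
    haveI : NeZero p := ⟨hp.pos.ne'⟩
    ∑ x : ZMod p, x = 0 := by
  haveI := Fact.mk hp
  haveI : NeZero p := ⟨hp.pos.ne'⟩
  have h : ∑ x : ZMod p, x = ∑ x : ZMod p, -x :=
    (Fintype.sum_equiv (Equiv.neg _) _ _ (fun x => rfl)).symm.trans (by simp)
  have h2 : (2 : ZMod p) * ∑ x : ZMod p, x = 0 := by
    rw [two_mul]; nth_rewrite 2 [h]; rw [← Finset.sum_add_distrib]; simp
  have h2ne : (2 : ZMod p) ≠ 0 := by
    intro hc
    have hdvd : p ∣ 2 := by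
      have := (ZMod.natCast_eq_zero_iff 2 p).mp (by exact_mod_cast hc)
      exact this
    have hle := Nat.le_of_dvd (by norm_num) hdvd
    have h2le := hp.two_le
    have : p = 2 := by omega
    subst this
    simp [Nat.odd_iff] at hodd
  exact (mul_eq_zero.mp h2).resolve_left h2ne

open Finset in
lemma miri_sum_inv (p : ℕ) (hp : p.Prime) (hodd : Odd p) :
    ∑ j ∈ Finset.Icc 1 (p - 1), ((j : ZMod p))⁻¹ = 0 := by
  haveI := Fact.mk hp
  haveI : NeZero p := ⟨hp.pos.ne'⟩
  have hpos : 0 < p := hp.pos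
  have key : ∑ j ∈ Finset.Icc 1 (p - 1), ((j : ZMod p))⁻¹
      = ∑ x ∈ (Finset.univ : Finset (ZMod p)).erase 0, x := by
    refine Finset.sum_nbij' (i := fun j => ((j : ZMod p))⁻¹)
      (j := fun x : ZMod p => (x⁻¹ : ZMod p).val) ?_ ?_ ?_ ?_ ?_
    · intro j hj
      simp only [Finset.mem_Icc] at hj
      have hjne : (j : ZMod p) ≠ 0 := by
        rw [Ne, ZMod.natCast_eq_zero_iff]
        intro hdvd
        have := Nat.le_of_dvd (by omega) hdvd
        omega
      simp [inv_ne_zero hjne]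
    · intro x hx
      simp only [Finset.mem_erase, Finset.mem_univ, and_true] at hx
      have hinv : (x⁻¹ : ZMod p) ≠ 0 := inv_ne_zero hx
      have hvne : (x⁻¹ : ZMod p).val ≠ 0 := by
        intro hc; apply hinv; rwa [← ZMod.val_eq_zero]
      simp only [Finset.mem_Icc]
      have := (x⁻¹ : ZMod p).val_lt
      omega
    · intro j hj
      simp only [Finset.mem_Icc] at hj
      show (((j : ZMod p))⁻¹⁻¹).val = j
      rw [inv_inv, ZMod.val_natCast_of_lt (by omega)]
    · intro x hx
      show (((x⁻¹ : ZMod p).val : ℕ) : ZMod p)⁻¹ = x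
      rw [ZMod.natCast_val, ZMod.cast_id, inv_inv]
    · intro j hj; rfl
  rw [key, Finset.sum_erase (f := fun x : ZMod p => x) (a := (0 : ZMod p)) Finset.univ rfl]
  exact miri_sum_univ p hp hodd

lemma miri_choose_neg_one (p : ℕ) (hp : p.Prime) :
    ∀ k, k ≤ p - 1 → (((p - 1).choose k : ℕ) : ZMod p) = (-1 : ZMod p) ^ k := by
  intro k
  induction k with
  | zero => simp
  | succ k ih =>
    intro hk
    have hk' : k ≤ p - 1 := by omega
    have hp1 : 0 < p := hp.pos
    have hsucc : p.choose (k + 1) = (p - 1).choose k + (p - 1).choose (k + 1) := by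
      conv_lhs => rw [show p = (p - 1) + 1 by omega]
      rw [Nat.choose_succ_succ]
    have hdvd : (p : ℕ) ∣ p.choose (k + 1) :=
      hp.dvd_choose_self (by omega) (by omega)
    have hcast : ((p.choose (k + 1) : ℕ) : ZMod p) = 0 :=
      (ZMod.natCast_eq_zero_iff _ _).mpr hdvd
    rw [hsucc] at hcast
    push_cast at hcast
    rw [ih hk'] at hcast
    have : (((p - 1).choose (k + 1) : ℕ) : ZMod p) = -(-1 : ZMod p) ^ k := by
      linear_combination hcast
    rw [this, pow_succ]
    ring

open Finset in
theorem mirimanoff_one_sub (p : ℕ) (hp : p.Prime) (hodd : Odd p) (a : ZMod p) :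
    mirimanoff p a = mirimanoff p (1 - a) := by
  haveI := Fact.mk hp
  have hne2 : p ≠ 2 := by rintro rfl; simp [Nat.odd_iff] at hodd
  have hp3 : 3 ≤ p := by have := hp.two_le; omega
  have hcast_ne : ∀ j : ℕ, 1 ≤ j → j ≤ p - 1 → (j : ZMod p) ≠ 0 := by
    intro j h1 h2
    rw [Ne, ZMod.natCast_eq_zero_iff]
    intro hdvd
    have := Nat.le_of_dvd (by omega) hdvd
    omega
  have expand : ∀ j ∈ Finset.Icc 1 (p - 1),
      (1 - a) ^ j = 1 + ∑ k ∈ Finset.Icc 1 j, (j.choose k : ZMod p) * (-a) ^ k := by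
    intro j hj
    simp only [Finset.mem_Icc] at hj
    have h1 : (1 - a) = (-a) + 1 := by ring
    rw [h1, add_pow]
    have hIcc : Finset.Icc 1 j = (Finset.range (j + 1)).erase 0 := by
      ext x
      simp only [Finset.mem_Icc, Finset.mem_range, Finset.mem_erase]
      omega
    rw [← Finset.sum_erase_add _ _ (Finset.mem_range.mpr (by omega : 0 < j + 1)), hIcc]
    simp only [pow_zero, one_mul, Nat.choose_zero_right, Nat.cast_one, mul_one, one_pow]
    rw [add_comm]
    congr 1
    refine Finset.sum_congr rfl fun k hk => ?_
    ring
  refine Eq.symm ?_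
  unfold mirimanoff
  calc ∑ j ∈ Finset.Icc 1 (p-1), (j : ZMod p)⁻¹ * (1 - a) ^ j
      = ∑ j ∈ Finset.Icc 1 (p-1), ((j : ZMod p)⁻¹
          + ∑ k ∈ Finset.Icc 1 j, (j : ZMod p)⁻¹ * ((j.choose k : ℕ) : ZMod p) * (-a) ^ k) := by
        refine Finset.sum_congr rfl fun j hj => ?_
        rw [expand j hj, mul_add, mul_one, Finset.mul_sum]
        congr 1
        refine Finset.sum_congr rfl fun k hk => ?_
        ring
    _ = ∑ k ∈ Finset.Icc 1 (p-1), ∑ j ∈ Finset.Icc k (p-1),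
          (j : ZMod p)⁻¹ * ((j.choose k : ℕ) : ZMod p) * (-a) ^ k := by
        rw [Finset.sum_add_distrib, miri_sum_inv p hp hodd, zero_add]
        exact Finset.sum_comm' (by intro j k; simp only [Finset.mem_Icc]; omega)
    _ = ∑ k ∈ Finset.Icc 1 (p-1), (k : ZMod p)⁻¹ * a ^ k := by
        refine Finset.sum_congr rfl fun k hk => ?_
        simp only [Finset.mem_Icc] at hk
        have hkne : (k : ZMod p) ≠ 0 := hcast_ne k hk.1 hk.2
        have step : ∀ j ∈ Finset.Icc k (p-1),
            (j : ZMod p)⁻¹ * ((j.choose k : ℕ) : ZMod p)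
              = (k : ZMod p)⁻¹ * (((j-1).choose (k-1) : ℕ) : ZMod p) := by
          intro j hj
          simp only [Finset.mem_Icc] at hj
          have hjne : (j : ZMod p) ≠ 0 := hcast_ne j (by omega) hj.2
          have hnat : j * ((j-1).choose (k-1)) = j.choose k * k := by
            calc j * ((j-1).choose (k-1))
                = ((j-1)+1) * ((j-1).choose (k-1)) := by rw [show (j-1)+1 = j by omega]
              _ = ((j-1)+1).choose ((k-1)+1) * ((k-1)+1) := Nat.add_one_mul_choose_eq _ _
              _ = j.choose k * k := by
                  rw [show (j-1)+1 = j by omega, show (k-1)+1 = k by omega]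
          rw [inv_mul_eq_div, inv_mul_eq_div, div_eq_div_iff hjne hkne]
          have hc := congrArg (fun n : ℕ => (n : ZMod p)) hnat
          push_cast at hc
          linear_combination -hc
        have inner : ∑ j ∈ Finset.Icc k (p-1), (j : ZMod p)⁻¹ * ((j.choose k : ℕ) : ZMod p)
            = (k : ZMod p)⁻¹ * (-1 : ZMod p) ^ k := by
          rw [Finset.sum_congr rfl step, ← Finset.mul_sum]
          congr 1
          have reindex : ∑ j ∈ Finset.Icc k (p-1), (((j-1).choose (k-1) : ℕ) : ZMod p)
              = ∑ i ∈ Finset.Icc (k-1) (p-2), ((i.choose (k-1) : ℕ) : ZMod p) := by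
            refine Finset.sum_nbij' (i := fun j => j - 1) (j := fun i => i + 1) ?_ ?_ ?_ ?_ ?_
            · intro j hj; simp only [Finset.mem_Icc] at *; omega
            · intro i hi; simp only [Finset.mem_Icc] at *; omega
            · intro j hj; simp only [Finset.mem_Icc] at hj; show j - 1 + 1 = j; omega
            · intro i hi; simp only [Finset.mem_Icc] at hi; show i + 1 - 1 = i; omega
            · intro j hj; rfl
          rw [reindex, ← Nat.cast_sum, Nat.sum_Icc_choose]
          rw [show p - 2 + 1 = p - 1 by omega, show k - 1 + 1 = k by omega]
          exact miri_choose_neg_one p hp k hk.2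
        rw [← Finset.sum_mul, inner]
        have : ((-1 : ZMod p)) ^ k * (-a) ^ k = a ^ k := by
          rw [← mul_pow]; ring_nf
        calc (k : ZMod p)⁻¹ * (-1:ZMod p) ^ k * (-a) ^ k
            = (k : ZMod p)⁻¹ * ((-1:ZMod p) ^ k * (-a) ^ k) := by ring
          _ = (k : ZMod p)⁻¹ * a ^ k := by rw [this]
end

section
/- Let p be an odd prime. For every a ∈ 𝔽_p with a ≠ 0, γ_p(a) = −a·γ_p(a^{-1}) in 𝔽_p. -/
open Finset

theorem Finset.sum_Icc_one_tsub_reflect {M : Type*} [AddCommMonoid M] (f : ℕ → M) (n : ℕ) :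
    ∑ j ∈ Icc 1 (n - 1), f (n - j) = ∑ j ∈ Icc 1 (n - 1), f j := by
  refine sum_nbij' (n - ·) (n - ·) ?_ ?_ ?_ ?_ ?_ <;> intro j hj <;> simp only [mem_Icc] at hj ⊢
    <;> omega

theorem ZMod.inv_mul_pow_tsub {p : ℕ} [Fact p.Prime] {a : ZMod p} (ha : a ≠ 0) {j : ℕ}
    (hj : j ≤ p) :
    ((p - j : ℕ) : ZMod p)⁻¹ * a ^ (p - j) = -a * ((j : ZMod p)⁻¹ * a⁻¹ ^ j) := by
  have hcast : ((p - j : ℕ) : ZMod p) = -(j : ZMod p) := by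
    rw [Nat.cast_sub hj, ZMod.natCast_self, zero_sub]
  rw [hcast, pow_sub₀ a ha hj, ZMod.pow_card, inv_neg, inv_pow]
  ring

theorem mirimanoff_inv_general (p : ℕ) (hp : p.Prime)
    (a : ZMod p) (ha : a ≠ 0) :
    mirimanoff p a = -a * mirimanoff p a⁻¹ := by
  have : Fact p.Prime := ⟨hp⟩
  rw [mirimanoff, ← sum_Icc_one_tsub_reflect, mirimanoff, mul_sum]
  refine sum_congr rfl fun j hj => ZMod.inv_mul_pow_tsub ha ?_
  exact (mem_Icc.mp hj).2.trans (Nat.sub_le p 1)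

theorem mirimanoff_inv (p : ℕ) (hp : p.Prime) (hodd : Odd p)
    (a : ZMod p) (ha : a ≠ 0) :
    mirimanoff p a = -a * mirimanoff p a⁻¹ :=
  mirimanoff_inv_general p hp a ha
end

section
/- Let p be an odd prime and regard γ_p = ∑_{j=1}^{p-1} j^{-1}·X^j as a polynomial in 𝔽_p[X]. Its formal derivative equals 1 + X + X² + ⋯ + X^{p−2}; consequently, every c ∈ 𝔽_p with c ≠ 0, c ≠ 1 and γ_p(c) = 0 is a root of γ_p of multiplicity at least two, i.e., (X − c)² divides γ_p in 𝔽_p[X]. -/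
/-- The Mirimanoff polynomial γ_p = ∑_{j=1}^{p-1} j⁻¹·X^j ∈ 𝔽_p[X]. -/
noncomputable def mirimanoffPoly (p : ℕ) : Polynomial (ZMod p) :=
  ∑ j ∈ Finset.Icc 1 (p - 1), Polynomial.C ((j : ZMod p)⁻¹) * Polynomial.X ^ j

/-!
Each term j⁻¹ X^j differentiates to X^(j-1), since 1, …, p-1 are units of 𝔽_p; so γ_p' is the
geometric sum 1 + X + ⋯ + X^(p-2). At c ∉ {0, 1} this sum is (c^(p-1) - 1)/(c - 1) = 0 by Fermat's
little theorem, so any root c ∉ {0, 1} of γ_p is also a root of γ_p', hence a double root.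
-/

open Polynomial Finset

theorem geom_sum_eq_zero_of_pow_eq_one {R : Type*} [CommRing R] [IsDomain R] {x : R} {n : ℕ}
    (hx : x ≠ 1) (hxn : x ^ n = 1) : ∑ i ∈ range n, x ^ i = 0 := by
  have h : (∑ i ∈ range n, x ^ i) * (x - 1) = 0 := by rw [geom_sum_mul, hxn, sub_self]
  exact (mul_eq_zero.1 h).resolve_right (sub_ne_zero.2 hx)

namespace Polynomial

theorem sq_X_sub_C_dvd_of_isRoot_derivative {R : Type*} [CommRing R] {f : R[X]} {c : R}
    (hf : f.IsRoot c) (hf' : f.derivative.IsRoot c) : (X - C c) ^ 2 ∣ f := by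
  rcases eq_or_ne f 0 with rfl | hf0
  · exact dvd_zero _
  · exact (le_rootMultiplicity_iff hf0).1 ((one_lt_rootMultiplicity_iff_isRoot hf0).2 ⟨hf, hf'⟩)

theorem derivative_sum_Icc_inv_mul_X_pow {K : Type*} [Field K] {n : ℕ}
    (hn : ∀ j ∈ Icc 1 n, (j : K) ≠ 0) :
    derivative (∑ j ∈ Icc 1 n, C (j : K)⁻¹ * X ^ j) = ∑ i ∈ range n, X ^ i := by
  rw [map_sum, ← Ico_add_one_right_eq_Icc, sum_Ico_eq_sum_range, Nat.add_sub_cancel]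
  refine sum_congr rfl fun i hi => ?_
  rw [derivative_C_mul_X_pow, add_tsub_cancel_left, add_comm 1 i,
    inv_mul_cancel₀ (hn _ (by simp at hi ⊢; omega)), C_1, one_mul]

end Polynomial

theorem ZMod.natCast_ne_zero_of_mem_Icc {p : ℕ} [Fact p.Prime] {j : ℕ} (hj : j ∈ Icc 1 (p - 1)) :
    (j : ZMod p) ≠ 0 := by
  rw [mem_Icc] at hj
  rw [Ne, ZMod.natCast_eq_zero_iff]
  exact Nat.not_dvd_of_pos_of_lt hj.1 (by have := (Fact.out : p.Prime).two_le; omega)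

theorem mirimanoffPoly_derivative_and_double_roots_general (p : ℕ) (hp : p.Prime) :
    Polynomial.derivative (mirimanoffPoly p) =
      ∑ i ∈ Finset.range (p - 1), Polynomial.X ^ i ∧
    ∀ c : ZMod p, c ≠ 0 → c ≠ 1 → (mirimanoffPoly p).eval c = 0 →
      (Polynomial.X - Polynomial.C c) ^ 2 ∣ mirimanoffPoly p := by
  have : Fact p.Prime := ⟨hp⟩
  have hderiv : derivative (mirimanoffPoly p) = ∑ i ∈ range (p - 1), X ^ i :=
    derivative_sum_Icc_inv_mul_X_pow fun _ => ZMod.natCast_ne_zero_of_mem_Icc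
  refine ⟨hderiv, fun c hc0 hc1 hroot => sq_X_sub_C_dvd_of_isRoot_derivative hroot ?_⟩
  rw [IsRoot, hderiv, eval_geom_sum]
  exact geom_sum_eq_zero_of_pow_eq_one hc1 (ZMod.pow_card_sub_one_eq_one hc0)

theorem mirimanoffPoly_derivative_and_double_roots (p : ℕ) (hp : p.Prime) (hodd : Odd p) :
    Polynomial.derivative (mirimanoffPoly p) =
      ∑ i ∈ Finset.range (p - 1), Polynomial.X ^ i ∧
    ∀ c : ZMod p, c ≠ 0 → c ≠ 1 → (mirimanoffPoly p).eval c = 0 →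
      (Polynomial.X - Polynomial.C c) ^ 2 ∣ mirimanoffPoly p :=
  mirimanoffPoly_derivative_and_double_roots_general p hp
end
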